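/- arXiv:2602.02083 — 9 statements merged into one kernel-verified Lean document; each statement's English description precedes it below -/
import Mathlib

section
/- Let k be a client with observed index set obs(k) ⊆ {1,…,d} and mis(k) its complement, and assume Σ and Σ_{obs(k)} are invertible. Then the minimal risk over linear predictors from X_{obs(k)} satisfies min_{θ ∈ ℝ^{|obs(k)|}} E[(Y − θ^⊤ X_{obs(k)})²] = σ² + ‖(θ_*)_{mis(k)}‖²_{V_k}, where V_k := Σ_{mis(k)} − Σ_{mis(k),obs(k)} Σ_{obs(k)}^{-1} Σ_{obs(k),mis(k)} is the Schur complement of Σ_{obs(k)} in Σ. -/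
/-!
The risk of `θ` is the quadratic `E[Y²] - 2 θᵀγ_obs + θᵀ Σ_obs θ`; completing the square at
`Σ_obs⁻¹ γ_obs` shows its infimum is `E[Y²] - γ_obsᵀ Σ_obs⁻¹ γ_obs`. On the other side
`σ² = E[Y²] - θ_*ᵀγ` and `θ_*ᵀγ = θ_*ᵀ Σ θ_*`, which the block decomposition of `Σ` along
`obs ⊕ mis` splits as `γ_obsᵀ Σ_obs⁻¹ γ_obs + ‖(θ_*)_mis‖²_V` (note `γ_obs = (Σ θ_*)_obs`).
-/

open MeasureTheory Matrix

section Moments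

variable {Ω ι : Type*} [MeasurableSpace Ω] {μ : Measure Ω} [Fintype ι]

noncomputable def secondMomentMatrix (μ : Measure Ω) (X : Ω → ι → ℝ) : Matrix ι ι ℝ :=
  Matrix.of fun l j => ∫ ω, X ω l * X ω j ∂μ

noncomputable def crossMoment (μ : Measure Ω) (X : Ω → ι → ℝ) (Y : Ω → ℝ) : ι → ℝ :=
  fun j => ∫ ω, X ω j * Y ω ∂μ

variable {X : Ω → ι → ℝ} {Y : Ω → ℝ}

theorem integral_linComb_mul (hX : ∀ j, MemLp (fun ω => X ω j) 2 μ) (hY : MemLp Y 2 μ)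
    (t : ι → ℝ) :
    ∫ ω, (∑ j, t j * X ω j) * Y ω ∂μ = t ⬝ᵥ crossMoment μ X Y := by
  have hXY : ∀ j, Integrable (fun ω => X ω j * Y ω) μ := fun j => (hX j).integrable_mul hY
  simp_rw [Finset.sum_mul, mul_assoc]
  rw [integral_finsetSum _ fun j _ => (hXY j).const_mul (t j)]
  simp_rw [integral_const_mul]
  rfl

theorem dotProduct_secondMomentMatrix_mulVec (hX : ∀ j, MemLp (fun ω => X ω j) 2 μ)
    (t : ι → ℝ) :
    t ⬝ᵥ (secondMomentMatrix μ X *ᵥ t) = ∫ ω, (∑ j, t j * X ω j) ^ 2 ∂μ := by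
  have hZ : MemLp (fun ω => ∑ j, t j * X ω j) 2 μ :=
    memLp_finsetSum _ fun j _ => (hX j).const_mul (t j)
  simp_rw [sq, integral_linComb_mul hX hZ]
  congr 1
  ext j
  simp_rw [crossMoment, mul_comm (X _ j), integral_linComb_mul hX (hX j)]
  simp [mulVec, dotProduct, secondMomentMatrix, crossMoment, mul_comm]

theorem secondMomentMatrix_posSemidef (hX : ∀ j, MemLp (fun ω => X ω j) 2 μ) :
    (secondMomentMatrix μ X).PosSemidef := by
  refine posSemidef_iff_dotProduct_mulVec.mpr ⟨?_, fun t => ?_⟩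
  · ext l j
    simp [secondMomentMatrix, mul_comm]
  · rw [star_trivial, dotProduct_secondMomentMatrix_mulVec hX]
    exact integral_nonneg fun ω => sq_nonneg _

theorem integral_sub_linComb_sq (hX : ∀ j, MemLp (fun ω => X ω j) 2 μ) (hY : MemLp Y 2 μ)
    (t : ι → ℝ) :
    ∫ ω, (Y ω - ∑ j, t j * X ω j) ^ 2 ∂μ
      = ∫ ω, Y ω ^ 2 ∂μ - 2 * (t ⬝ᵥ crossMoment μ X Y)
        + t ⬝ᵥ (secondMomentMatrix μ X *ᵥ t) := by
  have hZ : MemLp (fun ω => ∑ j, t j * X ω j) 2 μ :=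
    memLp_finsetSum _ fun j _ => (hX j).const_mul (t j)
  have hexpand : ∀ ω, (Y ω - ∑ j, t j * X ω j) ^ 2
      = Y ω ^ 2 - 2 * ((∑ j, t j * X ω j) * Y ω) + (∑ j, t j * X ω j) ^ 2 := fun ω => by ring
  have hZY : Integrable (fun ω => (∑ j, t j * X ω j) * Y ω) μ := hZ.integrable_mul hY
  have hYZY : Integrable (fun ω => Y ω ^ 2 - 2 * ((∑ j, t j * X ω j) * Y ω)) μ :=
    hY.integrable_sq.sub (hZY.const_mul 2)
  simp_rw [hexpand]
  rw [integral_add hYZY hZ.integrable_sq,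
    integral_sub hY.integrable_sq (hZY.const_mul 2), integral_const_mul,
    integral_linComb_mul hX hY, dotProduct_secondMomentMatrix_mulVec hX]

end Moments

theorem Matrix.IsHermitian.dotProduct_mulVec_comm {ι : Type*} [Fintype ι] {S : Matrix ι ι ℝ}
    (hS : S.IsHermitian) (u v : ι → ℝ) : u ⬝ᵥ (S *ᵥ v) = v ⬝ᵥ (S *ᵥ u) := by
  rw [dotProduct_mulVec, ← mulVec_transpose, ← conjTranspose_eq_transpose_of_trivial, hS.eq,
    dotProduct_comm]

section QuadraticForms

variable {ι : Type*} [Fintype ι] [DecidableEq ι]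

theorem Matrix.PosSemidef.iInf_quadratic_eq {S : Matrix ι ι ℝ} (hS : S.PosSemidef)
    (hdet : IsUnit S.det) (c : ℝ) (g : ι → ℝ) :
    ⨅ θ, c - 2 * (θ ⬝ᵥ g) + θ ⬝ᵥ (S *ᵥ θ) = c - g ⬝ᵥ (S⁻¹ *ᵥ g) := by
  set θmin := S⁻¹ *ᵥ g
  have hSθmin : S *ᵥ θmin = g := by
    rw [mulVec_mulVec, mul_nonsing_inv _ hdet, one_mulVec]
  have hsquare : ∀ θ, c - 2 * (θ ⬝ᵥ g) + θ ⬝ᵥ (S *ᵥ θ)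
      = c - g ⬝ᵥ θmin + (θ - θmin) ⬝ᵥ (S *ᵥ (θ - θmin)) := by
    intro θ
    rw [mulVec_sub, hSθmin, dotProduct_sub, sub_dotProduct, sub_dotProduct,
      hS.1.dotProduct_mulVec_comm θmin, hSθmin, dotProduct_comm θmin]
    ring
  refine IsLeast.csInf_eq ⟨⟨θmin, by simp [hsquare]⟩, ?_⟩
  rintro _ ⟨θ, rfl⟩
  simpa [hsquare] using hS.dotProduct_mulVec_nonneg (θ - θmin)

noncomputable def Matrix.schurComplement (M : Matrix ι ι ℝ) (s : Finset ι) :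
    Matrix ↥(sᶜ) ↥(sᶜ) ℝ :=
  M.submatrix (Subtype.val : ↥(sᶜ) → ι) (Subtype.val : ↥(sᶜ) → ι)
    - M.submatrix (Subtype.val : ↥(sᶜ) → ι) (Subtype.val : ↥s → ι)
      * (M.submatrix (Subtype.val : ↥s → ι) (Subtype.val : ↥s → ι))⁻¹
      * M.submatrix (Subtype.val : ↥s → ι) (Subtype.val : ↥(sᶜ) → ι)

theorem Matrix.IsHermitian.dotProduct_mulVec_eq_add_schurComplement {M : Matrix ι ι ℝ}
    (hM : M.IsHermitian) (s : Finset ι)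
    (hs : IsUnit (M.submatrix (Subtype.val : ↥s → ι) (Subtype.val : ↥s → ι)).det) (v : ι → ℝ) :
    v ⬝ᵥ (M *ᵥ v)
      = (fun i : ↥s => (M *ᵥ v) i)
          ⬝ᵥ ((M.submatrix (Subtype.val : ↥s → ι) (Subtype.val : ↥s → ι))⁻¹
            *ᵥ fun i : ↥s => (M *ᵥ v) i)
        + (fun i : ↥(sᶜ) => v i) ⬝ᵥ (M.schurComplement s *ᵥ fun i : ↥(sᶜ) => v i) := by
  set A := M.submatrix (Subtype.val : ↥s → ι) (Subtype.val : ↥s → ι)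
  set B := M.submatrix (Subtype.val : ↥s → ι) (Subtype.val : ↥(sᶜ) → ι)
  set D := M.submatrix (Subtype.val : ↥(sᶜ) → ι) (Subtype.val : ↥(sᶜ) → ι)
  set vo : ↥s → ℝ := fun i => v i
  set vm : ↥(sᶜ) → ℝ := fun i => v i
  have hA : A.IsHermitian := hM.submatrix _
  have := invertibleOfIsUnitDet A hs
  let e : ↥s ⊕ ↥(sᶜ) ≃ ι :=
    (Equiv.sumCongr (Equiv.refl _) (Equiv.subtypeEquivRight fun _ => Finset.mem_compl)).trans
      (Equiv.sumCompl (· ∈ s))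
  have hC : M.submatrix (Subtype.val : ↥(sᶜ) → ι) (Subtype.val : ↥s → ι) = Bᴴ := by
    ext i j
    exact (hM.apply _ _).symm
  have hblocks : M.submatrix e e = Matrix.fromBlocks A B Bᴴ D := by
    rw [← hC]
    ext (i | i) (j | j) <;> rfl
  have hv : v ∘ e = Sum.elim vo vm := by
    ext (i | i) <;> rfl
  have hMv : (M *ᵥ v) ∘ e = Matrix.fromBlocks A B Bᴴ D *ᵥ Sum.elim vo vm := by
    rw [← hblocks, ← hv, submatrix_mulVec_equiv, Function.comp_assoc, e.self_comp_symm,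
      Function.comp_id]
  have hw : (fun i : ↥s => (M *ᵥ v) i) = A *ᵥ (vo + (A⁻¹ * B) *ᵥ vm) := by
    have := congrArg (· ∘ Sum.inl) hMv
    simp only [fromBlocks_mulVec] at this
    rw [mulVec_add, mulVec_mulVec, ← Matrix.mul_assoc, mul_inv_of_invertible, Matrix.one_mul]
    exact this
  have hquad :
      v ⬝ᵥ (M *ᵥ v) = Sum.elim vo vm ⬝ᵥ (Matrix.fromBlocks A B Bᴴ D *ᵥ Sum.elim vo vm) := by
    rw [← hMv, ← hv, dotProduct, dotProduct, ← e.sum_comp]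
    rfl
  have hblockSchur := schur_complement_eq₁₁ B D vo vm hA
  simp only [star_trivial, ← dotProduct_mulVec] at hblockSchur
  rw [hquad, hblockSchur, hw, mulVec_mulVec, inv_mul_of_invertible, one_mulVec, dotProduct_comm,
    schurComplement, hC]

end QuadraticForms

theorem stmt1_general
    {Ω : Type*} [MeasurableSpace Ω] (μ : Measure Ω)
    {d : ℕ} (X : Ω → Fin d → ℝ) (Y : Ω → ℝ)
    (hX : ∀ j, MemLp (fun ω => X ω j) 2 μ) (hY : MemLp Y 2 μ)
    (Sig : Matrix (Fin d) (Fin d) ℝ)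
    (hSig : ∀ l j, Sig l j = ∫ ω, X ω l * X ω j ∂μ)
    (gam : Fin d → ℝ) (hgam : ∀ j, gam j = ∫ ω, X ω j * Y ω ∂μ)
    (obs : Finset (Fin d))
    (hSigInv : IsUnit Sig.det)
    (hSobsInv : IsUnit (Sig.submatrix (Subtype.val : ↥obs → Fin d)
      (Subtype.val : ↥obs → Fin d)).det)
    (θstar : Fin d → ℝ) (hθstar : θstar = Sig⁻¹ *ᵥ gam)
    -- noise variance σ² = E[ε²] with ε = Y - X⊤θ*
    (σ2 : ℝ) (hσ2 : σ2 = ∫ ω, (Y ω - ∑ j, θstar j * X ω j) ^ 2 ∂μ)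
    -- Schur complement V = Σ_mis - Σ_{mis,obs} Σ_obs⁻¹ Σ_{obs,mis}
    (V : Matrix ↥(obsᶜ) ↥(obsᶜ) ℝ)
    (hV : V = Sig.submatrix (Subtype.val : ↥(obsᶜ) → Fin d) (Subtype.val : ↥(obsᶜ) → Fin d)
      - Sig.submatrix (Subtype.val : ↥(obsᶜ) → Fin d) (Subtype.val : ↥obs → Fin d)
        * (Sig.submatrix (Subtype.val : ↥obs → Fin d) (Subtype.val : ↥obs → Fin d))⁻¹
        * Sig.submatrix (Subtype.val : ↥obs → Fin d) (Subtype.val : ↥(obsᶜ) → Fin d)) :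
    (⨅ θ : ↥obs → ℝ, ∫ ω, (Y ω - ∑ j : ↥obs, θ j * X ω j) ^ 2 ∂μ)
      = σ2 + (fun j : ↥(obsᶜ) => θstar j) ⬝ᵥ (V *ᵥ fun j : ↥(obsᶜ) => θstar j) := by
  obtain rfl : Sig = secondMomentMatrix μ X := Matrix.ext hSig
  obtain rfl : gam = crossMoment μ X Y := funext hgam
  have hXobs : ∀ j : ↥obs, MemLp (fun ω => X ω j) 2 μ := fun j => hX j
  have hSigθstar : secondMomentMatrix μ X *ᵥ θstar = crossMoment μ X Y := by
    rw [hθstar, mulVec_mulVec, mul_nonsing_inv _ hSigInv, one_mulVec]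
  have hσ2_eq : σ2 = ∫ ω, Y ω ^ 2 ∂μ - θstar ⬝ᵥ crossMoment μ X Y := by
    rw [hσ2, integral_sub_linComb_sq hX hY, hSigθstar]
    ring
  have hschur := (secondMomentMatrix_posSemidef hX).1.dotProduct_mulVec_eq_add_schurComplement
    obs hSobsInv θstar
  rw [hSigθstar] at hschur
  have hmin : (⨅ θ : ↥obs → ℝ, ∫ ω, (Y ω - ∑ j : ↥obs, θ j * X ω j) ^ 2 ∂μ)
      = ∫ ω, Y ω ^ 2 ∂μ - (fun i : ↥obs => crossMoment μ X Y i)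
        ⬝ᵥ (((secondMomentMatrix μ X).submatrix Subtype.val Subtype.val)⁻¹
          *ᵥ fun i : ↥obs => crossMoment μ X Y i) := by
    rw [iInf_congr (integral_sub_linComb_sq hXobs hY)]
    exact (secondMomentMatrix_posSemidef hXobs).iInf_quadratic_eq hSobsInv _ _
  rw [hmin, hσ2_eq, show V = (secondMomentMatrix μ X).schurComplement obs from hV]
  linarith

/-- the minimal risk over linear predictors from `X_{obs}` equals
`σ² + ‖(θ_*)_mis‖²_{V}` where `V` is the Schur complement of `Σ_obs` in `Σ`. -/
theorem stmt1
    {Ω : Type*} [MeasurableSpace Ω] (μ : Measure Ω) [IsProbabilityMeasure μ]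
    {d : ℕ} (X : Ω → Fin d → ℝ) (Y : Ω → ℝ)
    (hXmeas : ∀ j, Measurable fun ω => X ω j) (hYmeas : Measurable Y)
    (hX : ∀ j, MemLp (fun ω => X ω j) 2 μ) (hY : MemLp Y 2 μ)
    (Sig : Matrix (Fin d) (Fin d) ℝ)
    (hSig : ∀ l j, Sig l j = ∫ ω, X ω l * X ω j ∂μ)
    (gam : Fin d → ℝ) (hgam : ∀ j, gam j = ∫ ω, X ω j * Y ω ∂μ)
    (obs : Finset (Fin d))
    (hSigInv : IsUnit Sig.det)
    (hSobsInv : IsUnit (Sig.submatrix (Subtype.val : ↥obs → Fin d)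
      (Subtype.val : ↥obs → Fin d)).det)
    (θstar : Fin d → ℝ) (hθstar : θstar = Sig⁻¹ *ᵥ gam)
    -- noise variance σ² = E[ε²] with ε = Y - X⊤θ*
    (σ2 : ℝ) (hσ2 : σ2 = ∫ ω, (Y ω - ∑ j, θstar j * X ω j) ^ 2 ∂μ)
    -- Schur complement V = Σ_mis - Σ_{mis,obs} Σ_obs⁻¹ Σ_{obs,mis}
    (V : Matrix ↥(obsᶜ) ↥(obsᶜ) ℝ)
    (hV : V = Sig.submatrix (Subtype.val : ↥(obsᶜ) → Fin d) (Subtype.val : ↥(obsᶜ) → Fin d)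
      - Sig.submatrix (Subtype.val : ↥(obsᶜ) → Fin d) (Subtype.val : ↥obs → Fin d)
        * (Sig.submatrix (Subtype.val : ↥obs → Fin d) (Subtype.val : ↥obs → Fin d))⁻¹
        * Sig.submatrix (Subtype.val : ↥obs → Fin d) (Subtype.val : ↥(obsᶜ) → Fin d)) :
    (⨅ θ : ↥obs → ℝ, ∫ ω, (Y ω - ∑ j : ↥obs, θ j * X ω j) ^ 2 ∂μ)
      = σ2 + (fun j : ↥(obsᶜ) => θstar j) ⬝ᵥ (V *ᵥ fun j : ↥(obsᶜ) => θstar j) :=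
  stmt1_general μ X Y hX hY Sig hSig gam hgam obs hSigInv hSobsInv θstar hθstar σ2 hσ2 V hV
end

section
/- Let obs(K+1) ⊆ {1,…,d} be any index set (possibly a pattern unseen during training) such that Π_{lj} > 0 for all l, j ∈ obs(K+1), and assume Σ_{obs(K+1)} is invertible. Then the component-wise plug-in estimator θ̂^{(K+1)}_{PI} := (Σ̂^{cw}_{obs(K+1)})^{-1} γ̂^{cw}_{obs(K+1)} converges almost surely, as n → ∞, to the oracle local coefficient θ^{(K+1)}_* := Σ_{obs(K+1)}^{-1} γ_{obs(K+1)}. -/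
/-!
Every entry of `Σ̂^{cw}` and `γ̂^{cw}` is a ratio of two empirical means of i.i.d. variables, and
the strong law makes both converge almost surely. The mask is a function of the client index,
which is independent of `(X, Y)`, so the numerators converge to `Π_{lj} Σ_{lj}` and `Π_{jj} γ_j`
and the ratios to `Σ_{lj}` and `γ_j` whenever `Π_{lj} > 0`. Matrix inversion is continuous at the
invertible `Σ_{obs}`, so the plug-in estimator converges to the oracle coefficient.
-/

open MeasureTheory ProbabilityTheory Matrix Filter Topology

section StrongLaw

variable {Ω α β : Type*} [MeasurableSpace Ω] [MeasurableSpace α] [MeasurableSpace β]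
  {μ : Measure Ω}

theorem ae_tendsto_average_comp {T : ℕ → Ω → α} (hT : ∀ i, Measurable (T i))
    (hindep : iIndepFun T μ) (hident : ∀ i, μ.map (T i) = μ.map (T 0))
    {g : α → ℝ} (hg : Measurable g) (hint : Integrable (fun ω => g (T 0 ω)) μ) :
    ∀ᵐ ω ∂μ, Tendsto (fun n : ℕ => (1 / (n : ℝ)) * ∑ i ∈ Finset.range n, g (T i ω))
      atTop (𝓝 (∫ ω, g (T 0 ω) ∂μ)) := by
  have h := strong_law_ae (μ := μ) (fun i ω => g (T i ω)) hint
    (fun i j hij => (hindep.indepFun hij).comp hg hg)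
    (fun i => IdentDistrib.comp ⟨(hT i).aemeasurable, (hT 0).aemeasurable, hident i⟩ hg)
  simpa only [smul_eq_mul, one_div] using h

theorem ae_tendsto_average_mul_of_indepFun {H : ℕ → Ω → α} {Z : ℕ → Ω → β}
    (hH : ∀ i, Measurable (H i)) (hZ : ∀ i, Measurable (Z i))
    (hiid : iIndepFun (fun i ω => (H i ω, Z i ω)) μ)
    (hident : ∀ i, μ.map (fun ω => (H i ω, Z i ω)) = μ.map (fun ω => (H 0 ω, Z 0 ω)))
    (hHZ : IndepFun (H 0) (Z 0) μ) {φ : α → ℝ} {ψ : β → ℝ}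
    (hφ : Measurable φ) (hψ : Measurable ψ)
    (hφi : Integrable (fun ω => φ (H 0 ω)) μ) (hψi : Integrable (fun ω => ψ (Z 0 ω)) μ) :
    ∀ᵐ ω ∂μ, Tendsto
      (fun n : ℕ => (1 / (n : ℝ)) * ∑ i ∈ Finset.range n, φ (H i ω) * ψ (Z i ω))
      atTop (𝓝 ((∫ ω, φ (H 0 ω) ∂μ) * ∫ ω, ψ (Z 0 ω) ∂μ)) := by
  rw [← hHZ.integral_fun_comp_mul_comp (hH 0).aemeasurable (hZ 0).aemeasurable
    hφ.aestronglyMeasurable hψ.aestronglyMeasurable]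
  exact ae_tendsto_average_comp (T := fun i ω => (H i ω, Z i ω)) (g := fun p => φ p.1 * ψ p.2)
    (fun i => (hH i).prodMk (hZ i)) hiid hident
    ((hφ.comp measurable_fst).mul (hψ.comp measurable_snd))
    ((hHZ.comp hφ hψ).integrable_mul hφi hψi)

end StrongLaw

theorem Filter.Tendsto.div_of_tendsto_mul {γ 𝕜 : Type*} [Field 𝕜] [TopologicalSpace 𝕜]
    [IsTopologicalDivisionRing 𝕜] {l : Filter γ} {a b : γ → 𝕜} {p s : 𝕜}
    (ha : Tendsto a l (𝓝 (p * s))) (hb : Tendsto b l (𝓝 p)) (hp : p ≠ 0) :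
    Tendsto (fun n => a n / b n) l (𝓝 s) := by
  have h := ha.div hb hp
  rwa [mul_div_cancel_left₀ s hp] at h

theorem Filter.Tendsto.inv_mulVec {γ ι 𝕜 : Type*} [Fintype ι] [DecidableEq ι] [Field 𝕜]
    [TopologicalSpace 𝕜] [IsTopologicalDivisionRing 𝕜] {l : Filter γ}
    {A : γ → Matrix ι ι 𝕜} {v : γ → ι → 𝕜} {A₀ : Matrix ι ι 𝕜} {v₀ : ι → 𝕜}
    (hA : Tendsto A l (𝓝 A₀)) (hv : Tendsto v l (𝓝 v₀)) (hdet : IsUnit A₀.det) :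
    Tendsto (fun n => (A n)⁻¹ *ᵥ v n) l (𝓝 (A₀⁻¹ *ᵥ v₀)) := by
  have hinv : ContinuousAt Inv.inv A₀ := continuousAt_matrix_inv A₀ <| by
    simpa only [Ring.inverse_eq_inv'] using continuousAt_inv₀ hdet.ne_zero
  exact ((continuous_fst.matrix_mulVec continuous_snd).tendsto _).comp
    ((hinv.tendsto.comp hA).prodMk_nhds hv)

/-- almost sure convergence of the component-wise plug-in estimator
to the oracle local coefficient for a (possibly unseen) pattern `obs(K+1)`,
provided every pair of its features is co-observed with positive probability. -/
theorem stmt5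
    {Ω : Type*} [MeasurableSpace Ω] (μ : Measure Ω) [IsProbabilityMeasure μ]
    {d K : ℕ}
    (obs : Fin K → Finset (Fin d))
    (H : ℕ → Ω → Fin K) (X : ℕ → Ω → Fin d → ℝ) (Y : ℕ → Ω → ℝ)
    (hHmeas : ∀ i, Measurable (H i))
    (hXmeas : ∀ i j, Measurable fun ω => X i ω j)
    (hYmeas : ∀ i, Measurable (Y i))
    (hX2 : ∀ i j, MemLp (fun ω => X i ω j) 2 μ) (hY2 : ∀ i, MemLp (Y i) 2 μ)
    -- i.i.d. samples
    (hiid : iIndepFun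
      (fun i ω => (H i ω, X i ω, Y i ω)) μ)
    (hident : ∀ i, μ.map (fun ω => (H i ω, X i ω, Y i ω))
      = μ.map (fun ω => (H 0 ω, X 0 ω, Y 0 ω)))
    -- MCAR: client index independent of the data
    (hMCAR : ∀ i, IndepFun (H i) (fun ω => (X i ω, Y i ω)) μ)
    -- observation masks
    (M : ℕ → Ω → Fin d → ℝ)
    (hM : ∀ i ω j, M i ω j = if j ∈ obs (H i ω) then (1 : ℝ) else 0)
    -- population moments and co-observation matrix
    (Sig : Matrix (Fin d) (Fin d) ℝ)
    (hSig : ∀ l j, Sig l j = ∫ ω, X 0 ω l * X 0 ω j ∂μ)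
    (gam : Fin d → ℝ) (hgam : ∀ j, gam j = ∫ ω, X 0 ω j * Y 0 ω ∂μ)
    (Pi : Matrix (Fin d) (Fin d) ℝ)
    (hPi : ∀ l j, Pi l j = ∫ ω, M 0 ω l * M 0 ω j ∂μ)
    -- the new client's observation pattern
    (obsNew : Finset (Fin d))
    (hsupport : ∀ l ∈ obsNew, ∀ j ∈ obsNew, 0 < Pi l j)
    (hSobsInv : IsUnit (Sig.submatrix (Subtype.val : ↥obsNew → Fin d)
      (Subtype.val : ↥obsNew → Fin d)).det)
    -- empirical component-wise estimators from the first n samples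
    (Pihat : ℕ → Ω → Matrix (Fin d) (Fin d) ℝ)
    (hPihat : ∀ n ω l j, Pihat n ω l j
      = (1 / (n : ℝ)) * ∑ i ∈ Finset.range n, M i ω l * M i ω j)
    (Sigcw : ℕ → Ω → Matrix (Fin d) (Fin d) ℝ)
    (hSigcw : ∀ n ω l j, Sigcw n ω l j
      = ((1 / (n : ℝ)) * ∑ i ∈ Finset.range n,
          (M i ω l * X i ω l) * (M i ω j * X i ω j)) / Pihat n ω l j)
    (gamcw : ℕ → Ω → Fin d → ℝ)
    (hgamcw : ∀ n ω j, gamcw n ω j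
      = ((1 / (n : ℝ)) * ∑ i ∈ Finset.range n,
          (M i ω j * X i ω j) * Y i ω) / Pihat n ω j j)
    -- the plug-in estimator and the oracle coefficient for the new client
    (θhat : ℕ → Ω → ↥obsNew → ℝ)
    (hθhat : ∀ n ω, θhat n ω
      = ((Sigcw n ω).submatrix (Subtype.val : ↥obsNew → Fin d)
          (Subtype.val : ↥obsNew → Fin d))⁻¹ *ᵥ (fun j : ↥obsNew => gamcw n ω j))
    (θoracle : ↥obsNew → ℝ)
    (hθoracle : θoracle = (Sig.submatrix (Subtype.val : ↥obsNew → Fin d)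
      (Subtype.val : ↥obsNew → Fin d))⁻¹ *ᵥ (fun j : ↥obsNew => gam j)) :
    ∀ᵐ ω ∂μ, Tendsto (fun n => θhat n ω) atTop (nhds θoracle) := by
  obtain ⟨m, hMm, hm_idem⟩ : ∃ m : Fin d → Fin K → ℝ,
      (∀ i ω j, M i ω j = m j (H i ω)) ∧ ∀ j h, m j h * m j h = m j h :=
    ⟨fun j h => if j ∈ obs h then 1 else 0, hM, fun j h => by dsimp only; split_ifs <;> norm_num⟩
  have hfin : ∀ φ : Fin K → ℝ, Integrable (fun ω => φ (H 0 ω)) μ := fun φ =>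
    (Integrable.of_finite (f := φ)).comp_measurable (hHmeas 0)
  have hmoment := fun {φ ψ} => ae_tendsto_average_mul_of_indepFun (φ := φ) (ψ := ψ) hHmeas
    (fun i => (measurable_pi_iff.2 (hXmeas i)).prodMk (hYmeas i)) hiid hident (hMCAR 0)
    (measurable_of_finite φ)
  have hPihat_lim : ∀ l j, ∀ᵐ ω ∂μ, Tendsto (fun n => Pihat n ω l j) atTop (𝓝 (Pi l j)) := by
    intro l j
    have hmean := hmoment (φ := fun h => m l h * m j h) (ψ := fun _ => 1) measurable_const
      (hfin fun h => m l h * m j h) (integrable_const 1)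
    simpa only [hPihat, one_div, hMm, hPi, mul_one, integral_const, probReal_univ, smul_eq_mul]
      using hmean
  have hSig_num : ∀ l j, ∀ᵐ ω ∂μ, Tendsto (fun n : ℕ => (1 / (n : ℝ)) * ∑ i ∈ Finset.range n,
      (M i ω l * X i ω l) * (M i ω j * X i ω j)) atTop (𝓝 (Pi l j * Sig l j)) := by
    intro l j
    have hmean := hmoment (φ := fun h => m l h * m j h) (ψ := fun z => z.1 l * z.1 j)
      (by fun_prop) (hfin fun h => m l h * m j h) ((hX2 0 l).integrable_mul (hX2 0 j))
    simp only [hPi, hSig, hMm]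
    refine hmean.mono fun ω h => h.congr fun n => ?_
    exact congrArg _ (Finset.sum_congr rfl fun i _ => mul_mul_mul_comm _ _ _ _)
  have hgam_num : ∀ j, ∀ᵐ ω ∂μ, Tendsto (fun n : ℕ => (1 / (n : ℝ)) * ∑ i ∈ Finset.range n,
      (M i ω j * X i ω j) * Y i ω) atTop (𝓝 (Pi j j * gam j)) := by
    intro j
    have hmean := hmoment (φ := m j) (ψ := fun z => z.1 j * z.2)
      (by fun_prop) (hfin (m j)) ((hX2 0 j).integrable_mul (hY2 0))
    simp only [hPi, hgam, hMm, hm_idem]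
    refine hmean.mono fun ω h => h.congr fun n => ?_
    exact congrArg _ (Finset.sum_congr rfl fun i _ => (mul_assoc _ _ _).symm)
  filter_upwards [ae_all_iff.2 fun l => ae_all_iff.2 (hPihat_lim l),
    ae_all_iff.2 fun l => ae_all_iff.2 (hSig_num l), ae_all_iff.2 hgam_num] with ω hP hS hG
  simp only [hθhat, hθoracle]
  refine Tendsto.inv_mulVec (tendsto_pi_nhds.2 fun a => tendsto_pi_nhds.2 fun b => ?_)
    (tendsto_pi_nhds.2 fun a => ?_) hSobsInv
  · simp only [submatrix_apply, hSigcw]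
    exact (hS a b).div_of_tendsto_mul (hP a b) (hsupport _ a.2 _ b.2).ne'
  · simp only [hgamcw]
    exact (hG a).div_of_tendsto_mul (hP a a) (hsupport _ a.2 _ a.2).ne'
end

section
/- Assume π := min_{l,j ∈ {1,…,d}} Π_{lj} > 0 and M² := max(E[‖X‖₂⁴], E[Y²‖X‖₂²]) < ∞. Then the component-wise covariance estimator satisfies E‖Σ − Σ̂^{cw}‖_F² ≤ (1−π)^n · Tr(Σ²) + (2/(nπ)) · E[‖X‖₂⁴], where ‖·‖_F is the Frobenius norm; similarly E‖γ − γ̂^{cw}‖₂² ≤ (1−π)^n · ‖γ‖₂² + (2/(nπ)) · E[Y²‖X‖₂²]. -/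
/-!
Fix a pair of features `(l, j)` and let `S` be the set of samples whose client observes both.
The estimator is the mean over `S` of the i.i.d. products `X_l X_j` (or `X_j Y`). By MCAR, `S` is
independent of the data, so conditionally on `S` the mean squared error is `Var / #S` when
`S ≠ ∅` and `m²`, the squared target, when `S = ∅`. Since `#S` is binomial `(n, p)` with `p ≥ π`,
the error is `(1 - p)ⁿ m² + Var · E[𝟙{#S > 0} / #S]`, and `E[𝟙{#S > 0} / #S] ≤ 2 / ((n + 1) p)`
because `C(n, k) / k ≤ 2 C(n + 1, k + 1) / (n + 1)`. Summing over the entries, with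
`Var ≤ E[(X_l X_j)²]`, gives both bounds.
-/

open MeasureTheory ProbabilityTheory Matrix Finset
open scoped BigOperators

theorem Nat.choose_div_le_two_mul_choose_succ_div (n : ℕ) {k : ℕ} (hk : 0 < k) :
    (n.choose k : ℝ) / k ≤ 2 * (n + 1).choose (k + 1) / (n + 1) := by
  have hpascal : ((n : ℝ) + 1) * n.choose k = (n + 1).choose (k + 1) * (k + 1) := by
    exact_mod_cast Nat.add_one_mul_choose_eq n k
  have hk1 : (1 : ℝ) ≤ k := by exact_mod_cast hk
  rw [div_le_div_iff₀ (by positivity) (by positivity)]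
  nlinarith [(Nat.cast_nonneg ((n + 1).choose (k + 1)) : (0 : ℝ) ≤ _)]

/-- The `k = 0` term vanishes since `x / 0 = 0`. -/
theorem sum_choose_mul_pow_mul_pow_div_le (n : ℕ) {p : ℝ} (hp0 : 0 < p) (hp1 : p ≤ 1) :
    ∑ k ∈ range (n + 1), n.choose k * p ^ k * (1 - p) ^ (n - k) / k ≤ 2 / ((n + 1) * p) := by
  have hterm : ∀ k ∈ range (n + 1), n.choose k * p ^ k * (1 - p) ^ (n - k) / k
      ≤ 2 / ((n + 1) * p) * ((n + 1).choose (k + 1) * p ^ (k + 1) * (1 - p) ^ (n - k)) := by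
    intro k _
    have hq : 0 ≤ 1 - p := by linarith
    rcases Nat.eq_zero_or_pos k with rfl | hk
    · simp only [Nat.cast_zero, div_zero]
      positivity
    · have := Nat.choose_div_le_two_mul_choose_succ_div n hk
      calc n.choose k * p ^ k * (1 - p) ^ (n - k) / k
          = n.choose k / k * (p ^ k * (1 - p) ^ (n - k)) := by ring
        _ ≤ 2 * (n + 1).choose (k + 1) / (n + 1) * (p ^ k * (1 - p) ^ (n - k)) := by gcongr
        _ = _ := by field_simp; ring
  -- the shifted sum is the binomial expansion of `(p + (1 - p)) ^ (n + 1)` without its first term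
  have hbinom : ∑ k ∈ range (n + 1), (n + 1).choose (k + 1) * p ^ (k + 1) * (1 - p) ^ (n - k)
      ≤ 1 := by
    have h := add_pow p (1 - p) (n + 1)
    rw [add_sub_cancel, one_pow, sum_range_succ'] at h
    simp only [pow_zero, one_mul, Nat.choose_zero_right, Nat.cast_one, mul_one,
      Nat.add_sub_add_right, Nat.sub_zero] at h
    have h0 : 0 ≤ (1 - p) ^ (n + 1) := pow_nonneg (by linarith) _
    linarith [show ∑ k ∈ range (n + 1), (n + 1).choose (k + 1) * p ^ (k + 1) * (1 - p) ^ (n - k)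
      = ∑ k ∈ range (n + 1), p ^ (k + 1) * (1 - p) ^ (n - k) * (n + 1).choose (k + 1) from
        sum_congr rfl fun _ _ => by ring]
  calc _ ≤ ∑ k ∈ range (n + 1),
        2 / ((n + 1) * p) * ((n + 1).choose (k + 1) * p ^ (k + 1) * (1 - p) ^ (n - k)) :=
        sum_le_sum hterm
    _ ≤ 2 / ((n + 1) * p) * 1 := by
        rw [← mul_sum]; gcongr
    _ = _ := mul_one _

theorem sum_finset_pow_mul_pow_mul_ite_eq {ι : Type*} [Fintype ι] (p a v : ℝ) :
    ∑ S : Finset ι, p ^ #S * (1 - p) ^ (Fintype.card ι - #S) * (if #S = 0 then a else v / #S)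
      = (1 - p) ^ Fintype.card ι * a + v * ∑ k ∈ range (Fintype.card ι + 1),
          (Fintype.card ι).choose k * p ^ k * (1 - p) ^ (Fintype.card ι - k) / k := by
  have hcard := sum_powerset_apply_card (x := (univ : Finset ι))
    fun k => p ^ k * (1 - p) ^ (Fintype.card ι - k) * (if k = 0 then a else v / k)
  simp only [powerset_univ, card_univ] at hcard
  rw [hcard, mul_sum, sum_range_succ', sum_range_succ']
  simp only [Nat.choose_zero_right, if_true, pow_zero, Nat.sub_zero, Nat.cast_zero, div_zero,
    mul_zero, add_zero, nsmul_eq_mul, Nat.cast_one, one_mul, Nat.add_one_ne_zero, if_false]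
  rw [add_comm]
  congr 1
  exact sum_congr rfl fun k _ => by ring

section SubsampleMean

variable {Ω ι α β : Type*} [MeasurableSpace Ω] [MeasurableSpace α] [MeasurableSpace β]
  {μ : Measure Ω}

theorem MeasureTheory.memLp_expect {p : ENNReal} {Z : ι → Ω → ℝ} (S : Finset ι)
    (hZ : ∀ i ∈ S, MemLp (Z i) p μ) : MemLp (fun ω => 𝔼 i ∈ S, Z i ω) p μ := by
  have hsum : MemLp (fun ω => ∑ i ∈ S, Z i ω) p μ := memLp_finsetSum S hZ
  simp_rw [expect_eq_sum_div_card, div_eq_mul_inv]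
  exact hsum.mul_const _

variable [IsProbabilityMeasure μ]

theorem ProbabilityTheory.IndepFun.integral_indicator_one_mul {A : Set Ω} {f : Ω → ℝ}
    (hA : MeasurableSet A) (hf : Integrable f μ) (hAf : IndepFun (A.indicator (1 : Ω → ℝ)) f μ) :
    Integrable (fun ω => A.indicator 1 ω * f ω) μ ∧
      ∫ ω, A.indicator 1 ω * f ω ∂μ = μ.real A * ∫ ω, f ω ∂μ := by
  have hA1 : Integrable (A.indicator (1 : Ω → ℝ)) μ := (integrable_const 1).indicator hA
  refine ⟨hAf.integrable_mul hA1 hf, ?_⟩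
  have h := hAf.integral_mul_eq_mul_integral hA1.aestronglyMeasurable hf.aestronglyMeasurable
  simp only [Pi.mul_apply] at h
  rw [h, integral_indicator_one hA]

theorem integral_sq_sub_expect {Z : ι → Ω → ℝ} (hind : iIndepFun Z μ) {i₀ : ι}
    (hident : ∀ i, IdentDistrib (Z i) (Z i₀) μ μ) (h2 : MemLp (Z i₀) 2 μ) {S : Finset ι}
    (hS : S.Nonempty) :
    ∫ ω, (μ[Z i₀] - 𝔼 i ∈ S, Z i ω) ^ 2 ∂μ = Var[Z i₀; μ] / #S := by
  have hmem : ∀ i, MemLp (Z i) 2 μ := fun i => (hident i).memLp_iff.mpr h2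
  have hS0 : (#S : ℝ) ≠ 0 := by exact_mod_cast hS.card_ne_zero
  have hA : (fun ω => 𝔼 i ∈ S, Z i ω) = fun ω => (#S : ℝ)⁻¹ * (∑ i ∈ S, Z i) ω := by
    ext ω; rw [expect_eq_sum_div_card, Finset.sum_apply, div_eq_inv_mul]
  have hmean : μ[fun ω => 𝔼 i ∈ S, Z i ω] = μ[Z i₀] := by
    rw [hA, integral_const_mul, sum_fn,
      integral_finsetSum _ fun i _ => (hmem i).integrable one_le_two]
    simp_rw [(hident _).integral_eq, sum_const, nsmul_eq_mul]
    field_simp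
  calc ∫ ω, (μ[Z i₀] - 𝔼 i ∈ S, Z i ω) ^ 2 ∂μ
      = ∫ ω, ((𝔼 i ∈ S, Z i ω) - μ[fun ω => 𝔼 i ∈ S, Z i ω]) ^ 2 ∂μ := by
        rw [hmean]; congr with ω; ring
    _ = Var[fun ω => 𝔼 i ∈ S, Z i ω; μ] := (variance_eq_integral
          (memLp_expect S fun i _ => hmem i).aestronglyMeasurable.aemeasurable).symm
    _ = (#S : ℝ)⁻¹ ^ 2 * ∑ i ∈ S, Var[Z i; μ] := by
        rw [hA, variance_const_mul, IndepFun.variance_sum (fun i _ => hmem i)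
          fun i _ j _ hij => hind.indepFun hij]
    _ = Var[Z i₀; μ] / #S := by
        simp_rw [(hident _).variance_eq, sum_const, nsmul_eq_mul]
        field_simp

variable [Fintype ι]

theorem ProbabilityTheory.iIndepFun.indepFun_pi_of_indepFun {f : ι → Ω → α} {g : ι → Ω → β}
    (hf : ∀ i, Measurable (f i)) (hg : ∀ i, Measurable (g i))
    (h : iIndepFun (fun i ω => (f i ω, g i ω)) μ) (hfg : ∀ i, IndepFun (f i) (g i) μ) :
    IndepFun (fun ω i => f i ω) (fun ω i => g i ω) μ := by
  have hF : iIndepFun f μ := h.comp (fun _ => Prod.fst) fun _ => measurable_fst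
  have hG : iIndepFun g μ := h.comp (fun _ => Prod.snd) fun _ => measurable_snd
  rw [indepFun_iff_map_prod_eq_prod_map_map (measurable_pi_lambda _ hf).aemeasurable
    (measurable_pi_lambda _ hg).aemeasurable, hF.map_fun_eq_pi_map fun i => (hf i).aemeasurable,
    hG.map_fun_eq_pi_map fun i => (hg i).aemeasurable,
    ← (measurePreserving_arrowProdEquivProdArrow α β ι _ _).map_eq]
  simp_rw [← fun i => (hfg i).map_prod_eq_prod_map_map (hf i).aemeasurable (hg i).aemeasurable,
    ← h.map_fun_eq_pi_map fun i => ((hf i).prodMk (hg i)).aemeasurable]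
  rw [Measure.map_map (MeasurableEquiv.measurable _)
    (measurable_pi_lambda _ fun i => (hf i).prodMk (hg i))]
  rfl

variable [DecidableEq ι]

omit [MeasurableSpace α] in
theorem filter_mem_eq_iff {T : Set α} [DecidablePred (· ∈ T)] (h : ι → α) (S : Finset ι) :
    univ.filter (fun i => h i ∈ T) = S ↔ ∀ i, h i ∈ if i ∈ S then T else Tᶜ := by
  simp only [Finset.ext_iff, mem_filter, mem_univ, true_and]
  refine forall_congr' fun i => ?_
  split_ifs with hi <;> simp [hi]

theorem measurableSet_filter_mem_eq {T : Set α} [DecidablePred (· ∈ T)] (hT : MeasurableSet T)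
    (S : Finset ι) : MeasurableSet {h : ι → α | univ.filter (fun i => h i ∈ T) = S} := by
  simp_rw [filter_mem_eq_iff, ← Set.mem_univ_pi]
  exact MeasurableSet.univ_pi fun i => by split_ifs <;> simp [hT]

theorem measureReal_filter_mem_eq {H : ι → Ω → α} (hH : ∀ i, Measurable (H i))
    (hind : iIndepFun H μ) {T : Set α} [DecidablePred (· ∈ T)] (hT : MeasurableSet T) {p : ℝ}
    (hp : ∀ i, μ.real (H i ⁻¹' T) = p) (S : Finset ι) :
    μ.real {ω | univ.filter (fun i => H i ω ∈ T) = S}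
      = p ^ #S * (1 - p) ^ (Fintype.card ι - #S) := by
  have hset : {ω | univ.filter (fun i => H i ω ∈ T) = S}
      = ⋂ i ∈ (univ : Finset ι), H i ⁻¹' (if i ∈ S then T else Tᶜ) := by
    ext ω; simp [filter_mem_eq_iff]
  have hmeas : ∀ i ∈ (univ : Finset ι), MeasurableSet (if i ∈ S then T else Tᶜ) := fun i _ => by
    split_ifs <;> simp [hT]
  have hfac : ∀ i, (μ (H i ⁻¹' if i ∈ S then T else Tᶜ)).toReal = if i ∈ S then p else 1 - p := by
    intro i
    split_ifs
    · exact hp i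
    · rw [Set.preimage_compl, ← measureReal_def, probReal_compl_eq_one_sub (hH i hT), hp]
  rw [hset, measureReal_def, hind.measure_inter_preimage_eq_mul _ hmeas, ENNReal.toReal_prod]
  simp_rw [hfac]
  rw [prod_ite, prod_const, prod_const, filter_univ_mem, filter_not, filter_univ_mem,
    ← compl_eq_univ_sdiff, card_compl]

theorem integral_sq_sub_expect_filter_mem {H : ι → Ω → α} {Z : ι → Ω → ℝ}
    (hH : ∀ i, Measurable (H i)) (hZ : ∀ i, Measurable (Z i))
    (hind : iIndepFun (fun i ω => (H i ω, Z i ω)) μ) (hHZ : ∀ i, IndepFun (H i) (Z i) μ) {i₀ : ι}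
    (hident : ∀ i, IdentDistrib (fun ω => (H i ω, Z i ω)) (fun ω => (H i₀ ω, Z i₀ ω)) μ μ)
    (h2 : MemLp (Z i₀) 2 μ) {T : Set α} [DecidablePred (· ∈ T)] (hT : MeasurableSet T) :
    Integrable (fun ω => (μ[Z i₀] - 𝔼 i ∈ univ.filter (fun i => H i ω ∈ T), Z i ω) ^ 2) μ ∧
    ∫ ω, (μ[Z i₀] - 𝔼 i ∈ univ.filter (fun i => H i ω ∈ T), Z i ω) ^ 2 ∂μ
      = (1 - μ.real (H i₀ ⁻¹' T)) ^ Fintype.card ι * μ[Z i₀] ^ 2 + Var[Z i₀; μ] *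
        ∑ k ∈ range (Fintype.card ι + 1), (Fintype.card ι).choose k * μ.real (H i₀ ⁻¹' T) ^ k
          * (1 - μ.real (H i₀ ⁻¹' T)) ^ (Fintype.card ι - k) / k := by
  set m := μ[Z i₀]
  set O : Ω → Finset ι := fun ω => univ.filter (fun i => H i ω ∈ T)
  have hO : ∀ S, MeasurableSet {ω | O ω = S} := fun S =>
    measurable_pi_lambda _ hH (measurableSet_filter_mem_eq hT S)
  have hmem : ∀ i, MemLp (Z i) 2 μ := fun i => ((hident i).comp measurable_snd).memLp_iff.mpr h2
  have hsq : ∀ S : Finset ι, Integrable (fun ω => (m - 𝔼 i ∈ S, Z i ω) ^ 2) μ := fun S =>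
    ((memLp_const m).sub (memLp_expect S fun i _ => hmem i)).integrable_sq
  -- the observed set is a function of the clients, which are independent of the data
  have hindep : ∀ S, IndepFun ({ω | O ω = S}.indicator (1 : Ω → ℝ))
      (fun ω => (m - 𝔼 i ∈ S, Z i ω) ^ 2) μ := fun S => by
    have hψ : Measurable fun z : ι → ℝ => (m - 𝔼 i ∈ S, z i) ^ 2 := by
      simp_rw [expect_eq_sum_div_card]; fun_prop
    exact (hind.indepFun_pi_of_indepFun hH hZ hHZ).comp
      (measurable_one.indicator (measurableSet_filter_mem_eq hT S)) hψ
  have hterm := fun S => (hindep S).integral_indicator_one_mul (hO S) (hsq S)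
  have hsplit : (fun ω => (m - 𝔼 i ∈ O ω, Z i ω) ^ 2)
      = fun ω => ∑ S, {ω | O ω = S}.indicator (1 : Ω → ℝ) ω * (m - 𝔼 i ∈ S, Z i ω) ^ 2 := by
    ext ω
    rw [Fintype.sum_eq_single (O ω) fun S hS => by simp [Set.indicator_of_notMem, Ne.symm hS]]
    simp
  have hp : ∀ i, μ.real (H i ⁻¹' T) = μ.real (H i₀ ⁻¹' T) := fun i =>
    congrArg ENNReal.toReal (((hident i).comp measurable_fst).measure_mem_eq hT)
  have hvar : ∀ S : Finset ι, ∫ ω, (m - 𝔼 i ∈ S, Z i ω) ^ 2 ∂μ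
      = if #S = 0 then m ^ 2 else Var[Z i₀; μ] / #S := fun S => by
    rcases S.eq_empty_or_nonempty with rfl | hS
    · simp
    · rw [if_neg (card_ne_zero.mpr hS)]
      exact integral_sq_sub_expect (hind.comp (fun _ => Prod.snd) fun _ => measurable_snd)
        (fun i => (hident i).comp measurable_snd) h2 hS
  refine ⟨hsplit ▸ integrable_finsetSum _ fun S _ => (hterm S).1, ?_⟩
  rw [hsplit, integral_finsetSum _ fun S _ => (hterm S).1, ← sum_finset_pow_mul_pow_mul_ite_eq]
  refine sum_congr rfl fun S _ => ?_
  rw [(hterm S).2, hvar, measureReal_filter_mem_eq hH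
    (hind.comp (fun _ => Prod.fst) fun _ => measurable_fst) hT hp S]

theorem integral_sq_sub_expect_filter_mem_le {H : ι → Ω → α} {V : ι → Ω → β}
    (hH : ∀ i, Measurable (H i)) (hV : ∀ i, Measurable (V i))
    (hind : iIndepFun (fun i ω => (H i ω, V i ω)) μ) {i₀ : ι}
    (hident : ∀ i, μ.map (fun ω => (H i ω, V i ω)) = μ.map (fun ω => (H i₀ ω, V i₀ ω)))
    (hHV : ∀ i, IndepFun (H i) (V i) μ) {ζ : β → ℝ} (hζ : Measurable ζ)
    (hζ2 : Integrable (fun ω => ζ (V i₀ ω) ^ 2) μ) {T : Set α} [DecidablePred (· ∈ T)]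
    (hT : MeasurableSet T) {π : ℝ} (hπ : 0 < π) (hπp : π ≤ μ.real (H i₀ ⁻¹' T)) :
    Integrable (fun ω => (∫ ω, ζ (V i₀ ω) ∂μ
        - 𝔼 i ∈ univ.filter (fun i => H i ω ∈ T), ζ (V i ω)) ^ 2) μ ∧
    ∫ ω, (∫ ω, ζ (V i₀ ω) ∂μ - 𝔼 i ∈ univ.filter (fun i => H i ω ∈ T), ζ (V i ω)) ^ 2 ∂μ
      ≤ (1 - π) ^ Fintype.card ι * (∫ ω, ζ (V i₀ ω) ∂μ) ^ 2
        + 2 / ((Fintype.card ι : ℝ) * π) * ∫ ω, ζ (V i₀ ω) ^ 2 ∂μ := by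
  have hpair : ∀ i, Measurable fun ω => (H i ω, V i ω) := fun i => (hH i).prodMk (hV i)
  have hζ' : Measurable fun t : α × β => (t.1, ζ t.2) := by fun_prop
  have h2 : MemLp (fun ω => ζ (V i₀ ω)) 2 μ :=
    (memLp_two_iff_integrable_sq (hζ.comp (hV i₀)).aestronglyMeasurable).mpr hζ2
  obtain ⟨hint, heq⟩ := integral_sq_sub_expect_filter_mem (Z := fun i ω => ζ (V i ω)) hH
    (fun i => hζ.comp (hV i)) (hind.comp (fun _ => _) fun _ => hζ')
    (fun i => (hHV i).comp measurable_id hζ)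
    (fun i => (IdentDistrib.mk (hpair i).aemeasurable (hpair i₀).aemeasurable (hident i)).comp hζ')
    h2 hT
  refine ⟨hint, heq.trans_le ?_⟩
  set p := μ.real (H i₀ ⁻¹' T)
  set n := Fintype.card ι
  have hp0 : 0 < p := hπ.trans_le hπp
  have hn : (1 : ℝ) ≤ n := by exact_mod_cast Fintype.card_pos_iff.mpr ⟨i₀⟩
  have hvar : Var[fun ω => ζ (V i₀ ω); μ] ≤ ∫ ω, ζ (V i₀ ω) ^ 2 ∂μ :=
    variance_le_expectation_sq h2.aestronglyMeasurable
  have hq : 0 ≤ 1 - p := sub_nonneg.mpr measureReal_le_one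
  calc _ ≤ (1 - π) ^ n * (∫ ω, ζ (V i₀ ω) ∂μ) ^ 2
        + (∫ ω, ζ (V i₀ ω) ^ 2 ∂μ) * (2 / ((n + 1) * p)) := by
        gcongr
        exact sum_choose_mul_pow_mul_pow_div_le n hp0 measureReal_le_one
    _ ≤ _ := by
        rw [mul_comm (∫ ω, ζ (V i₀ ω) ^ 2 ∂μ)]
        gcongr
        nlinarith

end SubsampleMean

section Assembly

variable {Ω : Type*} [MeasurableSpace Ω] {μ : Measure Ω}

theorem integral_finsetSum_le_of_le {κ : Type*} (s : Finset κ) {f g : κ → Ω → ℝ} {b : κ → ℝ}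
    {a c : ℝ} (hf : ∀ k ∈ s, Integrable (f k) μ ∧ ∫ ω, f k ω ∂μ ≤ a * b k + c * ∫ ω, g k ω ∂μ)
    (hg : ∀ k ∈ s, Integrable (g k) μ) :
    Integrable (fun ω => ∑ k ∈ s, f k ω) μ ∧
      ∫ ω, ∑ k ∈ s, f k ω ∂μ ≤ a * ∑ k ∈ s, b k + c * ∫ ω, ∑ k ∈ s, g k ω ∂μ := by
  refine ⟨integrable_finsetSum s fun k hk => (hf k hk).1, ?_⟩
  rw [integral_finsetSum s fun k hk => (hf k hk).1, integral_finsetSum s hg, mul_sum, mul_sum,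
    ← sum_add_distrib]
  exact sum_le_sum fun k hk => (hf k hk).2

variable {κ : Type*} [Fintype κ]

theorem sq_sum_sq_eq (x : κ → ℝ) : (∑ j, x j ^ 2) ^ 2 = ∑ l, ∑ j, (x l * x j) ^ 2 := by
  simp_rw [sq (∑ j, x j ^ 2), sum_mul_sum, mul_pow]

theorem mul_sum_sq_eq (x : κ → ℝ) (y : ℝ) : y ^ 2 * ∑ j, x j ^ 2 = ∑ j, (x j * y) ^ 2 := by
  simp_rw [mul_sum, mul_pow, mul_comm]

theorem integrable_sq_mul_of_integrable_sq_sum_sq {x : Ω → κ → ℝ}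
    (hx : ∀ j, Measurable fun ω => x ω j) (h : Integrable (fun ω => (∑ j, x ω j ^ 2) ^ 2) μ)
    (l j : κ) : Integrable (fun ω => (x ω l * x ω j) ^ 2) μ := by
  refine h.mono' (by fun_prop) (ae_of_all _ fun ω => ?_)
  rw [Real.norm_of_nonneg (sq_nonneg _), sq_sum_sq_eq]
  calc (x ω l * x ω j) ^ 2 ≤ ∑ j, (x ω l * x ω j) ^ 2 :=
        single_le_sum (f := fun j => (x ω l * x ω j) ^ 2) (fun _ _ => sq_nonneg _) (mem_univ j)
    _ ≤ ∑ l, ∑ j, (x ω l * x ω j) ^ 2 :=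
        single_le_sum (f := fun l => ∑ j, (x ω l * x ω j) ^ 2)
          (fun _ _ => sum_nonneg fun _ _ => sq_nonneg _) (mem_univ l)

theorem integrable_sq_mul_of_integrable_sq_mul_sum_sq {x : Ω → κ → ℝ} {y : Ω → ℝ}
    (hx : ∀ j, Measurable fun ω => x ω j) (hy : Measurable y)
    (h : Integrable (fun ω => y ω ^ 2 * ∑ j, x ω j ^ 2) μ) (j : κ) :
    Integrable (fun ω => (x ω j * y ω) ^ 2) μ := by
  refine h.mono' (by fun_prop) (ae_of_all _ fun ω => ?_)
  rw [Real.norm_of_nonneg (sq_nonneg _), mul_sum_sq_eq]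
  exact single_le_sum (f := fun j => (x ω j * y ω) ^ 2) (fun _ _ => sq_nonneg _) (mem_univ j)

theorem Matrix.trace_mul_self_eq_sum_sq {A : Matrix κ κ ℝ} (hA : A.IsSymm) :
    trace (A * A) = ∑ l, ∑ j, A l j ^ 2 := by
  simp only [trace, diag, mul_apply, sq]
  exact sum_congr rfl fun l _ => sum_congr rfl fun j _ => by rw [hA.apply j l]

theorem ite_card_pos_mul_sum_eq_expect {ι : Type*} (S : Finset ι) (w : ι → ℝ) :
    (if 0 < #S then 1 / (#S : ℝ) * ∑ i ∈ S, w i else 0) = 𝔼 i ∈ S, w i := by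
  split_ifs with h
  · rw [expect_eq_sum_div_card, one_div_mul_eq_div]
  · rw [Nat.not_lt, Nat.le_zero, card_eq_zero] at h
    simp [h]

end Assembly

section Masks

variable {Ω : Type*} {d K n : ℕ} {obs : Fin K → Finset (Fin d)} {H : Fin n → Ω → Fin K}
  {M : Fin n → Ω → Fin d → ℝ} {N : Ω → Fin d → Fin d → ℕ}

theorem mask_mul_mask (hM : ∀ i ω j, M i ω j = if j ∈ obs (H i ω) then (1 : ℝ) else 0)
    (i : Fin n) (ω : Ω) (l j : Fin d) :
    M i ω l * M i ω j = if l ∈ obs (H i ω) ∧ j ∈ obs (H i ω) then 1 else 0 := by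
  rw [hM, hM, ite_zero_mul_ite_zero, mul_one]

theorem integral_mask_mul_mask [MeasurableSpace Ω] {μ : Measure Ω} (hH : ∀ i, Measurable (H i))
    (hM : ∀ i ω j, M i ω j = if j ∈ obs (H i ω) then (1 : ℝ) else 0) (i : Fin n) (l j : Fin d) :
    ∫ ω, M i ω l * M i ω j ∂μ = μ.real (H i ⁻¹' {k | l ∈ obs k ∧ j ∈ obs k}) := by
  have hind : (fun ω => M i ω l * M i ω j) = (H i ⁻¹' {k | l ∈ obs k ∧ j ∈ obs k}).indicator 1 := by
    ext ω
    simp only [mask_mul_mask hM, Set.indicator, Set.mem_preimage, Set.mem_ofPred_eq, Pi.one_apply]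
  rw [hind, integral_indicator_one (hH i .of_discrete)]

theorem componentwise_cov_eq_expect {X : Fin n → Ω → Fin d → ℝ}
    (hM : ∀ i ω j, M i ω j = if j ∈ obs (H i ω) then (1 : ℝ) else 0)
    (hN : ∀ ω l j, N ω l j
      = (Finset.univ.filter fun i : Fin n => l ∈ obs (H i ω) ∧ j ∈ obs (H i ω)).card)
    {Sigcw : Ω → Matrix (Fin d) (Fin d) ℝ}
    (hSigcw : ∀ ω l j, Sigcw ω l j
      = if 0 < N ω l j then
          (1 / (N ω l j : ℝ)) * ∑ i, M i ω l * M i ω j * X i ω l * X i ω j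
        else 0) (ω : Ω) (l j : Fin d) :
    Sigcw ω l j = 𝔼 i ∈ univ.filter (fun i => l ∈ obs (H i ω) ∧ j ∈ obs (H i ω)),
      X i ω l * X i ω j := by
  rw [hSigcw, hN, ← ite_card_pos_mul_sum_eq_expect, sum_filter]
  simp_rw [mask_mul_mask hM, ite_mul, one_mul, zero_mul]

theorem componentwise_cross_eq_expect {X : Fin n → Ω → Fin d → ℝ} {Y : Fin n → Ω → ℝ}
    (hM : ∀ i ω j, M i ω j = if j ∈ obs (H i ω) then (1 : ℝ) else 0)
    (hN : ∀ ω l j, N ω l j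
      = (Finset.univ.filter fun i : Fin n => l ∈ obs (H i ω) ∧ j ∈ obs (H i ω)).card)
    {gamcw : Ω → Fin d → ℝ}
    (hgamcw : ∀ ω j, gamcw ω j
      = if 0 < N ω j j then (1 / (N ω j j : ℝ)) * ∑ i, M i ω j * X i ω j * Y i ω
        else 0) (ω : Ω) (j : Fin d) :
    gamcw ω j = 𝔼 i ∈ univ.filter (fun i => j ∈ obs (H i ω) ∧ j ∈ obs (H i ω)),
      X i ω j * Y i ω := by
  rw [hgamcw, hN, ← ite_card_pos_mul_sum_eq_expect, sum_filter]
  simp_rw [hM, ite_mul, one_mul, zero_mul, and_self]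

end Masks

theorem stmt6_general
    {Ω : Type*} [MeasurableSpace Ω] (μ : Measure Ω) [IsProbabilityMeasure μ]
    {d K n : ℕ} [NeZero n]
    (obs : Fin K → Finset (Fin d))
    (H : Fin n → Ω → Fin K) (X : Fin n → Ω → Fin d → ℝ) (Y : Fin n → Ω → ℝ)
    (hHmeas : ∀ i, Measurable (H i))
    (hXmeas : ∀ i j, Measurable fun ω => X i ω j)
    (hYmeas : ∀ i, Measurable (Y i))
    -- i.i.d. samples
    (hiid : iIndepFun
      (fun i ω => (H i ω, X i ω, Y i ω)) μ)
    (hident : ∀ i, μ.map (fun ω => (H i ω, X i ω, Y i ω))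
      = μ.map (fun ω => (H 0 ω, X 0 ω, Y 0 ω)))
    -- MCAR: client index independent of the data
    (hMCAR : ∀ i, IndepFun (H i) (fun ω => (X i ω, Y i ω)) μ)
    -- moment assumption M² = max(E‖X‖₂⁴, E[Y²‖X‖₂²]) < ∞
    (hX4 : Integrable (fun ω => (∑ j, X 0 ω j ^ 2) ^ 2) μ)
    (hY2X2 : Integrable (fun ω => Y 0 ω ^ 2 * ∑ j, X 0 ω j ^ 2) μ)
    -- observation masks
    (M : Fin n → Ω → Fin d → ℝ)
    (hM : ∀ i ω j, M i ω j = if j ∈ obs (H i ω) then (1 : ℝ) else 0)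
    -- population moments and co-observation matrix
    (Sig : Matrix (Fin d) (Fin d) ℝ)
    (hSig : ∀ l j, Sig l j = ∫ ω, X 0 ω l * X 0 ω j ∂μ)
    (gam : Fin d → ℝ) (hgam : ∀ j, gam j = ∫ ω, X 0 ω j * Y 0 ω ∂μ)
    (Pi : Matrix (Fin d) (Fin d) ℝ)
    (hPi : ∀ l j, Pi l j = ∫ ω, M 0 ω l * M 0 ω j ∂μ)
    (π : ℝ) (hπdef : π = ⨅ l : Fin d, ⨅ j : Fin d, Pi l j) (hπpos : 0 < π)
    -- co-observation counts and component-wise estimators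
    (N : Ω → Fin d → Fin d → ℕ)
    (hN : ∀ ω l j, N ω l j
      = (Finset.univ.filter fun i : Fin n =>
          l ∈ obs (H i ω) ∧ j ∈ obs (H i ω)).card)
    (Sigcw : Ω → Matrix (Fin d) (Fin d) ℝ)
    (hSigcw : ∀ ω l j, Sigcw ω l j
      = if 0 < N ω l j then
          (1 / (N ω l j : ℝ)) * ∑ i, M i ω l * M i ω j * X i ω l * X i ω j
        else 0)
    (gamcw : Ω → Fin d → ℝ)
    (hgamcw : ∀ ω j, gamcw ω j
      = if 0 < N ω j j then (1 / (N ω j j : ℝ)) * ∑ i, M i ω j * X i ω j * Y i ω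
        else 0) :
    (∫ ω, ∑ l, ∑ j, (Sig l j - Sigcw ω l j) ^ 2 ∂μ
      ≤ (1 - π) ^ n * Matrix.trace (Sig * Sig)
        + (2 / (n * π)) * ∫ ω, (∑ j, X 0 ω j ^ 2) ^ 2 ∂μ) ∧
    (∫ ω, ∑ j, (gam j - gamcw ω j) ^ 2 ∂μ
      ≤ (1 - π) ^ n * (∑ j, gam j ^ 2)
        + (2 / (n * π)) * ∫ ω, Y 0 ω ^ 2 * ∑ j, X 0 ω j ^ 2 ∂μ) := by
  have hV : ∀ i, Measurable fun ω => (X i ω, Y i ω) := fun i =>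
    (measurable_pi_lambda _ (hXmeas i)).prodMk (hYmeas i)
  have hobs : ∀ l j, π ≤ μ.real (H 0 ⁻¹' {k | l ∈ obs k ∧ j ∈ obs k}) := fun l j => by
    rw [← integral_mask_mul_mask hHmeas hM, ← hPi, hπdef]
    exact (ciInf_le (Finite.bddBelow_range _) l).trans (ciInf_le (Finite.bddBelow_range _) j)
  have key := fun l j (ζ : (Fin d → ℝ) × ℝ → ℝ) (hζ : Measurable ζ) hζ2 =>
    integral_sq_sub_expect_filter_mem_le hHmeas hV hiid hident hMCAR hζ hζ2
      (T := {k | l ∈ obs k ∧ j ∈ obs k}) .of_discrete hπpos (hobs l j)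
  simp only [Fintype.card_fin] at key
  have hXX := integrable_sq_mul_of_integrable_sq_sum_sq (hXmeas 0) hX4
  have hXY := integrable_sq_mul_of_integrable_sq_mul_sum_sq (hXmeas 0) (hYmeas 0) hY2X2
  have hSym : Sig.IsSymm := by ext l j; simp [hSig, mul_comm]
  constructor
  · simp_rw [trace_mul_self_eq_sum_sq hSym, sq_sum_sq_eq]
    refine (integral_finsetSum_le_of_le _ (fun l _ => integral_finsetSum_le_of_le _ (fun j _ => ?_)
      fun j _ => hXX l j) fun l _ => integrable_finsetSum _ fun j _ => hXX l j).2
    simp_rw [hSig l j, componentwise_cov_eq_expect hM hN hSigcw]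
    exact key l j (fun t => t.1 l * t.1 j) (by fun_prop) (hXX l j)
  · simp_rw [mul_sum_sq_eq]
    refine (integral_finsetSum_le_of_le _ (fun j _ => ?_) fun j _ => hXY j).2
    simp_rw [hgam j, componentwise_cross_eq_expect hM hN hgamcw]
    exact key j j (fun t => t.1 j * t.2) (by fun_prop) (hXY j)

/-- finite-sample moment bounds for the component-wise estimators:
`E‖Σ − Σ̂ᶜʷ‖_F² ≤ (1−π)ⁿ Tr(Σ²) + (2/(nπ)) E‖X‖₂⁴` and
`E‖γ − γ̂ᶜʷ‖₂² ≤ (1−π)ⁿ ‖γ‖₂² + (2/(nπ)) E[Y²‖X‖₂²]`. -/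
theorem stmt6
    {Ω : Type*} [MeasurableSpace Ω] (μ : Measure Ω) [IsProbabilityMeasure μ]
    {d K n : ℕ} [NeZero n] (hd : 0 < d)
    (obs : Fin K → Finset (Fin d))
    (H : Fin n → Ω → Fin K) (X : Fin n → Ω → Fin d → ℝ) (Y : Fin n → Ω → ℝ)
    (hHmeas : ∀ i, Measurable (H i))
    (hXmeas : ∀ i j, Measurable fun ω => X i ω j)
    (hYmeas : ∀ i, Measurable (Y i))
    -- i.i.d. samples
    (hiid : iIndepFun
      (fun i ω => (H i ω, X i ω, Y i ω)) μ)
    (hident : ∀ i, μ.map (fun ω => (H i ω, X i ω, Y i ω))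
      = μ.map (fun ω => (H 0 ω, X 0 ω, Y 0 ω)))
    -- MCAR: client index independent of the data
    (hMCAR : ∀ i, IndepFun (H i) (fun ω => (X i ω, Y i ω)) μ)
    -- moment assumption M² = max(E‖X‖₂⁴, E[Y²‖X‖₂²]) < ∞
    (hX4 : Integrable (fun ω => (∑ j, X 0 ω j ^ 2) ^ 2) μ)
    (hY2X2 : Integrable (fun ω => Y 0 ω ^ 2 * ∑ j, X 0 ω j ^ 2) μ)
    -- observation masks
    (M : Fin n → Ω → Fin d → ℝ)
    (hM : ∀ i ω j, M i ω j = if j ∈ obs (H i ω) then (1 : ℝ) else 0)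
    -- population moments and co-observation matrix
    (Sig : Matrix (Fin d) (Fin d) ℝ)
    (hSig : ∀ l j, Sig l j = ∫ ω, X 0 ω l * X 0 ω j ∂μ)
    (gam : Fin d → ℝ) (hgam : ∀ j, gam j = ∫ ω, X 0 ω j * Y 0 ω ∂μ)
    (Pi : Matrix (Fin d) (Fin d) ℝ)
    (hPi : ∀ l j, Pi l j = ∫ ω, M 0 ω l * M 0 ω j ∂μ)
    (π : ℝ) (hπdef : π = ⨅ l : Fin d, ⨅ j : Fin d, Pi l j) (hπpos : 0 < π)
    -- co-observation counts and component-wise estimators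
    (N : Ω → Fin d → Fin d → ℕ)
    (hN : ∀ ω l j, N ω l j
      = (Finset.univ.filter fun i : Fin n =>
          l ∈ obs (H i ω) ∧ j ∈ obs (H i ω)).card)
    (Sigcw : Ω → Matrix (Fin d) (Fin d) ℝ)
    (hSigcw : ∀ ω l j, Sigcw ω l j
      = if 0 < N ω l j then
          (1 / (N ω l j : ℝ)) * ∑ i, M i ω l * M i ω j * X i ω l * X i ω j
        else 0)
    (gamcw : Ω → Fin d → ℝ)
    (hgamcw : ∀ ω j, gamcw ω j
      = if 0 < N ω j j then (1 / (N ω j j : ℝ)) * ∑ i, M i ω j * X i ω j * Y i ω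
        else 0) :
    (∫ ω, ∑ l, ∑ j, (Sig l j - Sigcw ω l j) ^ 2 ∂μ
      ≤ (1 - π) ^ n * Matrix.trace (Sig * Sig)
        + (2 / (n * π)) * ∫ ω, (∑ j, X 0 ω j ^ 2) ^ 2 ∂μ) ∧
    (∫ ω, ∑ j, (gam j - gamcw ω j) ^ 2 ∂μ
      ≤ (1 - π) ^ n * (∑ j, gam j ^ 2)
        + (2 / (n * π)) * ∫ ω, Y 0 ω ^ 2 * ∑ j, X 0 ω j ^ 2 ∂μ) :=
  stmt6_general μ obs H X Y hHmeas hXmeas hYmeas hiid hident hMCAR hX4 hY2X2 M hM Sig hSig gam hgam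
    Pi hPi π hπdef hπpos N hN Sigcw hSigcw gamcw hgamcw
end

section
/- Under the MCAR assumption H ⟂ (X,Y) and invertibility of each Σ_{obs(k)}, the optimal linear imputation achieves the optimal linear risk: inf_{θ ∈ ℝ^d} E[(Y − θ^⊤ X̃)²] = Σ_{k=1}^K ρ_k · min_{θ^{(k)} ∈ ℝ^{|obs(k)|}} E[(Y − (θ^{(k)})^⊤ X_{obs(k)})²], where X̃ := φ^{opt}(X_{obs(H)}, H) and ρ_k := P(H = k); moreover the infimum on the left is attained at θ_*. -/
/-!
On the event `{H = k}` the imputed predictor `θ ⬝ X̃` is the linear predictor in `X_obs(k)` with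
coefficients `θ_obs + Aₖᵀ θ_mis`, where `Aₖ = Σ_{mis,obs} Σ_obs⁻¹`. By MCAR the risk of `θ` is
therefore `∑ ρ_k` times the restricted risks of these coefficients, hence at least
`∑ ρ_k` times the restricted optima. For `θ = θ_*` the coefficients solve the normal equations
`Σ_obs b = γ_obs` (use `Σ θ_* = γ` and the symmetry of `Σ`), so every restricted risk is optimal
and the bound is attained.
-/

open MeasureTheory ProbabilityTheory Matrix

section LeastSquares

variable {Ω ι : Type*} [MeasurableSpace Ω] {μ : Measure Ω} [Fintype ι]

theorem integral_add_sq_of_integral_mul_eq_zero {R D : Ω → ℝ} (hR : MemLp R 2 μ)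
    (hD : MemLp D 2 μ) (hRD : ∫ ω, R ω * D ω ∂μ = 0) :
    ∫ ω, (R ω + D ω) ^ 2 ∂μ = ∫ ω, R ω ^ 2 ∂μ + ∫ ω, D ω ^ 2 ∂μ := by
  have hRD' : Integrable (fun ω => 2 * (R ω * D ω)) μ := (hR.integrable_mul hD).const_mul 2
  calc ∫ ω, (R ω + D ω) ^ 2 ∂μ = ∫ ω, R ω ^ 2 + 2 * (R ω * D ω) + D ω ^ 2 ∂μ := by
        congr with ω; ring
    _ = ∫ ω, R ω ^ 2 ∂μ + ∫ ω, D ω ^ 2 ∂μ := by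
        rw [integral_add (f := fun ω => R ω ^ 2 + 2 * (R ω * D ω))
            (hR.integrable_sq.add hRD') hD.integrable_sq,
          integral_add hR.integrable_sq hRD', integral_const_mul, hRD, mul_zero, add_zero]

variable {Z : ι → Ω → ℝ} {Y : Ω → ℝ}

theorem memLp_sub_sum_mul (hZ : ∀ i, MemLp (Z i) 2 μ) (hY : MemLp Y 2 μ) (β : ι → ℝ) :
    MemLp (fun ω => Y ω - ∑ i, β i * Z i ω) 2 μ :=
  hY.sub (memLp_finsetSum _ fun i _ => (hZ i).const_mul (β i))

theorem integral_sub_sum_mul_mul_eq (hZ : ∀ i, MemLp (Z i) 2 μ) (hY : MemLp Y 2 μ)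
    (β : ι → ℝ) (j : ι) :
    ∫ ω, (Y ω - ∑ i, β i * Z i ω) * Z j ω ∂μ
      = ∫ ω, Z j ω * Y ω ∂μ - ∑ i, (∫ ω, Z j ω * Z i ω ∂μ) * β i := by
  have hZZ : ∀ i, Integrable (fun ω => β i * (Z j ω * Z i ω)) μ :=
    fun i => ((hZ j).integrable_mul (hZ i)).const_mul (β i)
  calc ∫ ω, (Y ω - ∑ i, β i * Z i ω) * Z j ω ∂μ
      = ∫ ω, Z j ω * Y ω - ∑ i, β i * (Z j ω * Z i ω) ∂μ := by
        congr with ω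
        rw [sub_mul, Finset.sum_mul]
        congr 1 <;> [ring; exact Finset.sum_congr rfl fun i _ => by ring]
    _ = ∫ ω, Z j ω * Y ω ∂μ - ∑ i, (∫ ω, Z j ω * Z i ω ∂μ) * β i := by
        rw [integral_sub (f := fun ω => Z j ω * Y ω) ((hZ j).integrable_mul hY)
            (integrable_finsetSum _ fun i _ => hZZ i),
          integral_finsetSum _ fun i _ => hZZ i]
        simp only [integral_const_mul, mul_comm]

theorem integral_sq_sub_sum_mul_le_of_normal_eq (hZ : ∀ i, MemLp (Z i) 2 μ)
    (hY : MemLp Y 2 μ) {β : ι → ℝ}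
    (hβ : ∀ j, ∑ i, (∫ ω, Z j ω * Z i ω ∂μ) * β i = ∫ ω, Z j ω * Y ω ∂μ) (β' : ι → ℝ) :
    ∫ ω, (Y ω - ∑ i, β i * Z i ω) ^ 2 ∂μ ≤ ∫ ω, (Y ω - ∑ i, β' i * Z i ω) ^ 2 ∂μ := by
  set R := fun ω => Y ω - ∑ i, β i * Z i ω
  set D := fun ω => ∑ i, (β i - β' i) * Z i ω
  have hD : MemLp D 2 μ := memLp_finsetSum _ fun i _ => (hZ i).const_mul _
  have horth : ∫ ω, R ω * D ω ∂μ = 0 := by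
    have hRZ : ∀ i, Integrable (fun ω => (β i - β' i) * (R ω * Z i ω)) μ :=
      fun i => ((memLp_sub_sum_mul hZ hY β).integrable_mul (hZ i)).const_mul _
    calc ∫ ω, R ω * D ω ∂μ = ∫ ω, ∑ i, (β i - β' i) * (R ω * Z i ω) ∂μ := by
          congr with ω
          simp only [D, Finset.mul_sum]
          exact Finset.sum_congr rfl fun i _ => by ring
      _ = 0 := by
          rw [integral_finsetSum _ fun i _ => hRZ i]
          simp only [integral_const_mul, R, integral_sub_sum_mul_mul_eq hZ hY, hβ, sub_self,
            mul_zero, Finset.sum_const_zero]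
  have hsplit : ∀ ω, Y ω - ∑ i, β' i * Z i ω = R ω + D ω := fun ω => by
    simp only [R, D, sub_mul, Finset.sum_sub_distrib]
    ring
  simp_rw [hsplit]
  rw [integral_add_sq_of_integral_mul_eq_zero (memLp_sub_sum_mul hZ hY β) hD horth]
  exact le_add_of_nonneg_right (integral_nonneg fun ω => sq_nonneg _)

theorem ciInf_integral_sq_sub_sum_mul_eq_of_normal_eq (hZ : ∀ i, MemLp (Z i) 2 μ)
    (hY : MemLp Y 2 μ) {β : ι → ℝ}
    (hβ : ∀ j, ∑ i, (∫ ω, Z j ω * Z i ω ∂μ) * β i = ∫ ω, Z j ω * Y ω ∂μ) :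
    ⨅ β' : ι → ℝ, ∫ ω, (Y ω - ∑ i, β' i * Z i ω) ^ 2 ∂μ = ∫ ω, (Y ω - ∑ i, β i * Z i ω) ^ 2 ∂μ :=
  ciInf_eq_of_forall_ge_of_forall_gt_exists_lt
    (integral_sq_sub_sum_mul_le_of_normal_eq hZ hY hβ) fun _ hw => ⟨β, hw⟩

end LeastSquares

section MCAR

variable {Ω ι E : Type*} [MeasurableSpace Ω] {μ : Measure Ω} [Fintype ι] [MeasurableSpace ι]
  [MeasurableSingletonClass ι] [MeasurableSpace E] {H : Ω → ι} {V : Ω → E}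

theorem integral_comp_eq_sum_measureReal_mul_of_indepFun (hH : Measurable H)
    (hV : AEMeasurable V μ) (hHV : H ⟂ᵢ[μ] V) {g : ι → E → ℝ} (hg : ∀ k, Measurable (g k))
    (hint : ∀ k, Integrable (fun ω => g k (V ω)) μ) :
    ∫ ω, g (H ω) (V ω) ∂μ = ∑ k, μ.real (H ⁻¹' {k}) * ∫ ω, g k (V ω) ∂μ := by
  have hfiber : ∀ k, MeasurableSet (H ⁻¹' {k}) := fun k => hH (measurableSet_singleton k)
  have hon : ∀ k, Set.EqOn (fun ω => g (H ω) (V ω)) (fun ω => g k (V ω)) (H ⁻¹' {k}) :=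
    fun k ω hω => by simp only [show H ω = k from hω]
  calc ∫ ω, g (H ω) (V ω) ∂μ = ∫ ω in ⋃ k, H ⁻¹' {k}, g (H ω) (V ω) ∂μ := by
        rw [← Set.preimage_iUnion, Set.iUnion_of_singleton, Set.preimage_univ, setIntegral_univ]
    _ = ∑ k, ∫ ω in H ⁻¹' {k}, g k (V ω) ∂μ := by
        rw [integral_iUnion_fintype hfiber]
        · exact Finset.sum_congr rfl fun k _ => setIntegral_congr_fun (hfiber k) (hon k)
        · exact fun k l hkl => Disjoint.preimage H (Set.disjoint_singleton.mpr hkl)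
        · exact fun k => ((hint k).integrableOn).congr_fun (hon k).symm (hfiber k)
    _ = ∑ k, μ.real (H ⁻¹' {k}) * ∫ ω, g k (V ω) ∂μ := by
        refine Finset.sum_congr rfl fun k _ => ?_
        exact Indep.setIntegral_eq_mul hH.comap_le hHV hV ⟨{k}, measurableSet_singleton k, rfl⟩
          (hg k).aestronglyMeasurable

end MCAR

section Imputation

variable {n : Type*} [Fintype n] [DecidableEq n]

theorem dotProduct_eq_dotProduct_restrict_add_compl (s : Finset n) (v w : n → ℝ) :
    v ⬝ᵥ w = (fun l : ↥s => v l) ⬝ᵥ (fun l : ↥s => w l)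
      + (fun j : ↥sᶜ => v j) ⬝ᵥ (fun j : ↥sᶜ => w j) := by
  simp only [dotProduct, Finset.sum_coe_sort s (fun i => v i * w i),
    Finset.sum_coe_sort sᶜ (fun i => v i * w i), Finset.sum_add_sum_compl]

variable (S : Matrix n n ℝ) (s : Finset n)

noncomputable def imputationMatrix : Matrix ↥sᶜ ↥s ℝ :=
  (S.submatrix Subtype.val Subtype.val : Matrix ↥sᶜ ↥s ℝ) *
    (S.submatrix Subtype.val Subtype.val : Matrix ↥s ↥s ℝ)⁻¹

/-- `optImpute S (obs k)` is `φ^opt(·, k)`. -/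
noncomputable def optImpute (x : ↥s → ℝ) : n → ℝ := fun j =>
  if h : j ∈ s then x ⟨j, h⟩ else (imputationMatrix S s *ᵥ x) ⟨j, Finset.mem_compl.mpr h⟩

noncomputable def imputedCoeff (θ : n → ℝ) : ↥s → ℝ :=
  (fun l : ↥s => θ l) + (fun j : ↥sᶜ => θ j) ᵥ* imputationMatrix S s

theorem dotProduct_optImpute (θ : n → ℝ) (x : ↥s → ℝ) :
    θ ⬝ᵥ optImpute S s x = imputedCoeff S s θ ⬝ᵥ x := by
  have hobs : (fun l : ↥s => optImpute S s x l) = x := by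
    funext l; simp [optImpute, l.2]
  have hmis : (fun j : ↥sᶜ => optImpute S s x j) = imputationMatrix S s *ᵥ x := by
    funext j; simp [optImpute, Finset.mem_compl.mp j.2]
  rw [dotProduct_eq_dotProduct_restrict_add_compl s, hobs, hmis, imputedCoeff, add_dotProduct,
    dotProduct_mulVec]

theorem submatrix_mulVec_imputedCoeff (hS : S.IsSymm)
    (hs : IsUnit (S.submatrix (Subtype.val : ↥s → n) Subtype.val).det) (θ : n → ℝ) :
    S.submatrix Subtype.val Subtype.val *ᵥ imputedCoeff S s θ = fun l : ↥s => (S *ᵥ θ) l := by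
  -- symmetry of `S` turns `(Σ_ms Σ_ss⁻¹)ᵀ` into `Σ_ss⁻¹ Σ_sm`
  have hcross : (S.submatrix Subtype.val Subtype.val : Matrix ↥s ↥s ℝ) * (imputationMatrix S s)ᵀ
      = S.submatrix Subtype.val Subtype.val := by
    rw [imputationMatrix, transpose_mul, transpose_nonsing_inv, transpose_submatrix,
      transpose_submatrix, hS.eq, ← Matrix.mul_assoc, mul_nonsing_inv _ hs, Matrix.one_mul]
  funext l
  rw [imputedCoeff, mulVec_add, ← mulVec_transpose, mulVec_mulVec, hcross, mulVec,
    dotProduct_eq_dotProduct_restrict_add_compl s]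
  rfl

end Imputation

section ImputedRegression

variable {Ω ι n : Type*} [MeasurableSpace Ω] {μ : Measure Ω} [Fintype n] [DecidableEq n]
  {X : Ω → n → ℝ} {Y : Ω → ℝ} {S : Matrix n n ℝ}

theorem imputedCoeff_normal_eq (hS : ∀ l j, S l j = ∫ ω, X ω l * X ω j ∂μ) {g : n → ℝ}
    (hg : ∀ j, g j = ∫ ω, X ω j * Y ω ∂μ) {θ : n → ℝ} (hθ : S *ᵥ θ = g) (s : Finset n)
    (hs : IsUnit (S.submatrix (Subtype.val : ↥s → n) Subtype.val).det) (j : ↥s) :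
    ∑ i : ↥s, (∫ ω, X ω j * X ω i ∂μ) * imputedCoeff S s θ i = ∫ ω, X ω j * Y ω ∂μ := by
  have hSymm : S.IsSymm := by
    ext l j
    simp only [transpose_apply, hS, mul_comm]
  have := congrFun (submatrix_mulVec_imputedCoeff S s hSymm hs θ) j
  rw [hθ] at this
  simpa only [mulVec, dotProduct, submatrix_apply, hS, hg] using this

theorem integral_sq_sub_dotProduct_optImpute_eq_sum [Fintype ι] [MeasurableSpace ι]
    [MeasurableSingletonClass ι] {H : Ω → ι} (hH : Measurable H)
    (hX : ∀ j, MemLp (fun ω => X ω j) 2 μ) (hY : MemLp Y 2 μ)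
    (hHXY : H ⟂ᵢ[μ] fun ω => (X ω, Y ω)) (obs : ι → Finset n) (θ : n → ℝ) :
    ∫ ω, (Y ω - θ ⬝ᵥ optImpute S (obs (H ω)) (fun l => X ω l)) ^ 2 ∂μ
      = ∑ k, μ.real (H ⁻¹' {k})
          * ∫ ω, (Y ω - ∑ l : ↥(obs k), imputedCoeff S (obs k) θ l * X ω l) ^ 2 ∂μ := by
  simp_rw [dotProduct_optImpute]
  have hXY : AEMeasurable (fun ω => (X ω, Y ω)) μ :=
    (aemeasurable_pi_lambda _ fun j => (hX j).aemeasurable).prodMk hY.aemeasurable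
  exact integral_comp_eq_sum_measureReal_mul_of_indepFun hH hXY hHXY
    (g := fun k p => (p.2 - ∑ l : ↥(obs k), imputedCoeff S (obs k) θ l * p.1 l) ^ 2)
    (fun k => by fun_prop)
    fun k => (memLp_sub_sum_mul (fun l : ↥(obs k) => hX l) hY _).integrable_sq

end ImputedRegression

theorem stmt8_general
    {Ω : Type*} [MeasurableSpace Ω] (μ : Measure Ω)
    {d K : ℕ}
    (obs : Fin K → Finset (Fin d))
    (H : Ω → Fin K) (X : Ω → Fin d → ℝ) (Y : Ω → ℝ)
    (hHmeas : Measurable H)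
    (hX2 : ∀ j, MemLp (fun ω => X ω j) 2 μ) (hY2 : MemLp Y 2 μ)
    -- MCAR: client index independent of the data
    (hMCAR : IndepFun H (fun ω => (X ω, Y ω)) μ)
    -- population moments
    (Sig : Matrix (Fin d) (Fin d) ℝ)
    (hSig : ∀ l j, Sig l j = ∫ ω, X ω l * X ω j ∂μ)
    (gam : Fin d → ℝ) (hgam : ∀ j, gam j = ∫ ω, X ω j * Y ω ∂μ)
    (hSigInv : IsUnit Sig.det)
    (hSobsInv : ∀ k, IsUnit (Sig.submatrix (Subtype.val : ↥(obs k) → Fin d)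
      (Subtype.val : ↥(obs k) → Fin d)).det)
    (θstar : Fin d → ℝ) (hθstar : θstar = Sig⁻¹ *ᵥ gam)
    -- the optimally imputed covariate vector X̃ = φ^opt(X_obs(H), H)
    (tilde : Ω → Fin d → ℝ)
    (htilde : ∀ ω j, tilde ω j =
      if h : j ∈ obs (H ω) then X ω j
      else
        ((Sig.submatrix (Subtype.val : ↥((obs (H ω))ᶜ) → Fin d)
            (Subtype.val : ↥(obs (H ω)) → Fin d)
          * (Sig.submatrix (Subtype.val : ↥(obs (H ω)) → Fin d)
              (Subtype.val : ↥(obs (H ω)) → Fin d))⁻¹)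
          *ᵥ (fun l : ↥(obs (H ω)) => X ω l)) ⟨j, Finset.mem_compl.mpr h⟩) :
    (⨅ θ : Fin d → ℝ, ∫ ω, (Y ω - ∑ j, θ j * tilde ω j) ^ 2 ∂μ)
      = ∑ k : Fin K, (μ (H ⁻¹' {k})).toReal
          * (⨅ θk : ↥(obs k) → ℝ, ∫ ω, (Y ω - ∑ j : ↥(obs k), θk j * X ω j) ^ 2 ∂μ) ∧
    (∫ ω, (Y ω - ∑ j, θstar j * tilde ω j) ^ 2 ∂μ)
      = ⨅ θ : Fin d → ℝ, ∫ ω, (Y ω - ∑ j, θ j * tilde ω j) ^ 2 ∂μ := by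
  have hXobs : ∀ k (j : ↥(obs k)), MemLp (fun ω => X ω j) 2 μ := fun _ j => hX2 j
  have hSigθ : Sig *ᵥ θstar = gam := by
    rw [hθstar, mulVec_mulVec, mul_nonsing_inv _ hSigInv, one_mulVec]
  have hnormal := imputedCoeff_normal_eq hSig hgam hSigθ
  have htilde_eq : tilde = fun ω => optImpute Sig (obs (H ω)) (fun l => X ω l) :=
    funext₂ fun ω j => by rw [htilde]; rfl
  have hrisk : ∀ θ : Fin d → ℝ, ∫ ω, (Y ω - ∑ j, θ j * tilde ω j) ^ 2 ∂μ
      = ∑ k, (μ (H ⁻¹' {k})).toReal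
          * ∫ ω, (Y ω - ∑ l : ↥(obs k), imputedCoeff Sig (obs k) θ l * X ω l) ^ 2 ∂μ := by
    subst htilde_eq
    exact integral_sq_sub_dotProduct_optImpute_eq_sum hHmeas hX2 hY2 hMCAR obs
  have hle : ∀ θ : Fin d → ℝ, ∫ ω, (Y ω - ∑ j, θstar j * tilde ω j) ^ 2 ∂μ
      ≤ ∫ ω, (Y ω - ∑ j, θ j * tilde ω j) ^ 2 ∂μ := fun θ => by
    rw [hrisk, hrisk]
    exact Finset.sum_le_sum fun k _ => mul_le_mul_of_nonneg_left
      (integral_sq_sub_sum_mul_le_of_normal_eq (hXobs k) hY2 (hnormal _ (hSobsInv k)) _)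
      ENNReal.toReal_nonneg
  have hinf := ciInf_eq_of_forall_ge_of_forall_gt_exists_lt hle fun _ hw => ⟨θstar, hw⟩
  refine ⟨?_, hinf.symm⟩
  rw [hinf, hrisk]
  exact Finset.sum_congr rfl fun k _ => by
    rw [ciInf_integral_sq_sub_sum_mul_eq_of_normal_eq (hXobs k) hY2 (hnormal _ (hSobsInv k))]

/-- the optimal linear imputation achieves the optimal linear risk:
`inf_θ E[(Y − θ⊤X̃)²] = Σ_k ρ_k min_{θ⁽ᵏ⁾} E[(Y − θ⁽ᵏ⁾⊤X_{obs(k)})²]`, and the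
left infimum is attained at `θ_*`. -/
theorem stmt8
    {Ω : Type*} [MeasurableSpace Ω] (μ : Measure Ω) [IsProbabilityMeasure μ]
    {d K : ℕ}
    (obs : Fin K → Finset (Fin d))
    (H : Ω → Fin K) (X : Ω → Fin d → ℝ) (Y : Ω → ℝ)
    (hHmeas : Measurable H)
    (hXmeas : ∀ j, Measurable fun ω => X ω j) (hYmeas : Measurable Y)
    (hX2 : ∀ j, MemLp (fun ω => X ω j) 2 μ) (hY2 : MemLp Y 2 μ)
    -- MCAR: client index independent of the data
    (hMCAR : IndepFun H (fun ω => (X ω, Y ω)) μ)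
    -- population moments
    (Sig : Matrix (Fin d) (Fin d) ℝ)
    (hSig : ∀ l j, Sig l j = ∫ ω, X ω l * X ω j ∂μ)
    (gam : Fin d → ℝ) (hgam : ∀ j, gam j = ∫ ω, X ω j * Y ω ∂μ)
    (hSigInv : IsUnit Sig.det)
    (hSobsInv : ∀ k, IsUnit (Sig.submatrix (Subtype.val : ↥(obs k) → Fin d)
      (Subtype.val : ↥(obs k) → Fin d)).det)
    (θstar : Fin d → ℝ) (hθstar : θstar = Sig⁻¹ *ᵥ gam)
    -- the optimally imputed covariate vector X̃ = φ^opt(X_obs(H), H)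
    (tilde : Ω → Fin d → ℝ)
    (htilde : ∀ ω j, tilde ω j =
      if h : j ∈ obs (H ω) then X ω j
      else
        ((Sig.submatrix (Subtype.val : ↥((obs (H ω))ᶜ) → Fin d)
            (Subtype.val : ↥(obs (H ω)) → Fin d)
          * (Sig.submatrix (Subtype.val : ↥(obs (H ω)) → Fin d)
              (Subtype.val : ↥(obs (H ω)) → Fin d))⁻¹)
          *ᵥ (fun l : ↥(obs (H ω)) => X ω l)) ⟨j, Finset.mem_compl.mpr h⟩) :
    (⨅ θ : Fin d → ℝ, ∫ ω, (Y ω - ∑ j, θ j * tilde ω j) ^ 2 ∂μ)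
      = ∑ k : Fin K, (μ (H ⁻¹' {k})).toReal
          * (⨅ θk : ↥(obs k) → ℝ, ∫ ω, (Y ω - ∑ j : ↥(obs k), θk j * X ω j) ^ 2 ∂μ) ∧
    (∫ ω, (Y ω - ∑ j, θstar j * tilde ω j) ^ 2 ∂μ)
      = ⨅ θ : Fin d → ℝ, ∫ ω, (Y ω - ∑ j, θ j * tilde ω j) ^ 2 ∂μ :=
  stmt8_general μ obs H X Y hHmeas hX2 hY2 hMCAR Sig hSig gam hgam hSigInv hSobsInv θstar hθstar
    tilde htilde
end

section
/- For positive semidefinite matrices A, B ∈ ℝ^{d×d} with A ⪯ B (Loewner order) and any λ > 0, the degrees of freedom are monotone: Tr(A(A + λI_d)^{-1}) ≤ Tr(B(B + λI_d)^{-1}). -/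
/-!
Since `A (A + λ)⁻¹ = 1 - λ (A + λ)⁻¹`, the claim reduces to `Tr (B + λ)⁻¹ ≤ Tr (A + λ)⁻¹`, which
follows from the antitonicity of inversion on positive definite matrices. That in turn is read off
from the identity `M⁻¹ - N⁻¹ = N⁻¹ D N⁻¹ + (N⁻¹ D) M⁻¹ (N⁻¹ D)ᴴ` with `D = N - M`, whose right-hand
side is a sum of congruences of positive semidefinite matrices.
-/

open Matrix

namespace Matrix

variable {n : Type*} [Fintype n] [DecidableEq n]

theorem inv_sub_inv_eq_conj {R : Type*} [CommRing R] {M N : Matrix n n R}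
    (hM : IsUnit M.det) (hN : IsUnit N.det) :
    M⁻¹ - N⁻¹ = N⁻¹ * (N - M) * N⁻¹ + N⁻¹ * (N - M) * M⁻¹ * ((N - M) * N⁻¹) := by
  simp only [mul_sub, sub_mul, mul_assoc, mul_nonsing_inv _ hM, mul_nonsing_inv _ hN,
    nonsing_inv_mul _ hN, nonsing_inv_mul_cancel_left _ _ hM, mul_one, one_mul]
  abel

theorem PosDef.posSemidef_inv_sub_inv {K : Type*} [Field K] [PartialOrder K] [StarRing K]
    [StarOrderedRing K] {M N : Matrix n n K}
    (hM : M.PosDef) (hMN : (N - M).PosSemidef) : (M⁻¹ - N⁻¹).PosSemidef := by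
  have hN : N.PosDef := by simpa using hM.add_posSemidef hMN
  have hNinv : N⁻¹ᴴ = N⁻¹ := by rw [conjTranspose_nonsing_inv, hN.isHermitian.eq]
  have hconj : (N⁻¹ * (N - M))ᴴ = (N - M) * N⁻¹ := by
    rw [conjTranspose_mul, hNinv, hMN.isHermitian.eq]
  rw [inv_sub_inv_eq_conj ((isUnit_iff_isUnit_det _).mp hM.isUnit)
    ((isUnit_iff_isUnit_det _).mp hN.isUnit), ← hconj]
  nth_rewrite 2 [← hNinv]
  exact (hMN.mul_mul_conjTranspose_same _).add (hM.posSemidef.inv.mul_mul_conjTranspose_same _)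

theorem mul_inv_add_smul_one {R : Type*} [CommRing R] {A : Matrix n n R} {c : R}
    (h : IsUnit (A + c • 1).det) : A * (A + c • 1)⁻¹ = 1 - c • (A + c • 1)⁻¹ := by
  rw [eq_sub_iff_add_eq, ← smul_one_mul c (A + c • 1)⁻¹, ← add_mul, mul_nonsing_inv _ h]

end Matrix

/-- monotonicity of degrees of freedom: if `A ⪯ B` (Loewner) for
PSD matrices and `λ > 0`, then `Tr(A(A+λI)⁻¹) ≤ Tr(B(B+λI)⁻¹)`. -/
theorem stmt11
    {d : ℕ} (A B : Matrix (Fin d) (Fin d) ℝ)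
    (hA : A.PosSemidef) (hB : B.PosSemidef)
    (hAB : (B - A).PosSemidef)
    (lam : ℝ) (hlam : 0 < lam) :
    Matrix.trace (A * (A + lam • 1)⁻¹) ≤ Matrix.trace (B * (B + lam • 1)⁻¹) := by
  have hAlam : (A + lam • 1).PosDef := PosDef.posSemidef_add hA (PosDef.one.smul hlam)
  have hBlam : (B + lam • 1).PosDef := PosDef.posSemidef_add hB (PosDef.one.smul hlam)
  have hinv : ((A + lam • 1)⁻¹ - (B + lam • 1)⁻¹).PosSemidef :=
    hAlam.posSemidef_inv_sub_inv (by rwa [add_sub_add_right_eq_sub])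
  have htrace := hinv.trace_nonneg
  rw [trace_sub, sub_nonneg] at htrace
  rw [mul_inv_add_smul_one hAlam.det_pos.ne'.isUnit,
    mul_inv_add_smul_one hBlam.det_pos.ne'.isUnit, trace_sub, trace_sub, trace_smul, trace_smul,
    smul_eq_mul, smul_eq_mul]
  exact sub_le_sub_left (mul_le_mul_of_nonneg_left htrace hlam.le) _
end

section
/- Let A₁,…,A_K ∈ ℝ^{d×d} be positive semidefinite, ρ₁,…,ρ_K > 0 with Σ_k ρ_k = 1, A := Σ_k ρ_k A_k, and λ > 0. Then Tr(A(A + λI_d)^{-1}) ≤ Σ_{k=1}^K Tr(A_k(A_k + (λ/ρ_k) I_d)^{-1}). -/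
/-!
Write `S = ∑ₖ ρₖ Aₖ`. By linearity of the trace, `Tr(S (S + λ)⁻¹) = ∑ₖ ρₖ Tr(Aₖ (S + λ)⁻¹)`.
Since every summand is positive semidefinite, `ρₖ Aₖ + λ ⪯ S + λ`, so by Loewner antitonicity of
the inverse `(S + λ)⁻¹ ⪯ (ρₖ Aₖ + λ)⁻¹ = ρₖ⁻¹ (Aₖ + λ / ρₖ)⁻¹`, and `Tr(P X)` is monotone in `X`
for `P ⪰ 0`. Summing gives the claim.
-/

open Matrix
open scoped MatrixOrder ComplexOrder

namespace Matrix

variable {n 𝕜 : Type*} [Fintype n] [DecidableEq n] [RCLike 𝕜]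

theorem PosSemidef.trace_mul_nonneg {P Q : Matrix n n 𝕜} (hP : P.PosSemidef)
    (hQ : Q.PosSemidef) : 0 ≤ (P * Q).trace := by
  obtain ⟨B, rfl⟩ := CStarAlgebra.nonneg_iff_eq_star_mul_self.mp hQ.nonneg
  rw [← Matrix.mul_assoc, trace_mul_comm, ← Matrix.mul_assoc]
  exact (hP.mul_mul_conjTranspose_same B).trace_nonneg

/-- The block matrix `[[C, 1], [1, B⁻¹]]` Schur-reduces, at its two diagonal blocks, to `C - B`
and to `B⁻¹ - C⁻¹`. -/
theorem PosDef.inv_le_inv_of_le {B C : Matrix n n 𝕜} (hB : B.PosDef) (hBC : B ≤ C) :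
    C⁻¹ ≤ B⁻¹ := by
  have hC : C.PosDef := by simpa using hB.add_posSemidef (le_iff.mp hBC)
  let := hB.isUnit.invertible
  let := hC.isUnit.invertible
  have hblock : (fromBlocks C 1 1ᴴ B⁻¹).PosSemidef := by
    rw [PosDef.fromBlocks₂₂ _ _ hB.inv]
    simpa using le_iff.mp hBC
  rw [le_iff]
  simpa using (PosDef.fromBlocks₁₁ _ _ hC).mp hblock

theorem PosSemidef.trace_mul_inv_le_of_le {P B C : Matrix n n 𝕜} (hP : P.PosSemidef)
    (hB : B.PosDef) (hBC : B ≤ C) : (P * C⁻¹).trace ≤ (P * B⁻¹).trace := by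
  have := hP.trace_mul_nonneg (le_iff.mp (hB.inv_le_inv_of_le hBC))
  rwa [Matrix.mul_sub, trace_sub, sub_nonneg] at this

theorem inv_real_smul {D : Matrix n n 𝕜} (hD : IsUnit D) {c : ℝ} (hc : c ≠ 0) :
    (c • D)⁻¹ = c⁻¹ • D⁻¹ := by
  refine inv_eq_left_inv ?_
  rw [smul_mul_smul_comm, inv_mul_cancel₀ hc, nonsing_inv_mul _ ((isUnit_iff_isUnit_det D).mp hD),
    one_smul]

theorem PosSemidef.smul_trace_mul_inv_le {A S : Matrix n n 𝕜} (hA : A.PosSemidef) {c lam : ℝ}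
    (hc : 0 < c) (hlam : 0 < lam) (hAS : c • A ≤ S) :
    c • (A * (S + lam • 1)⁻¹).trace ≤ (A * (A + (lam / c) • 1)⁻¹).trace := by
  have hD : (A + (lam / c) • 1).PosDef := (PosDef.one.smul (div_pos hlam hc)).posSemidef_add hA
  have hscale : c • (A + (lam / c) • 1) = c • A + lam • 1 := by
    rw [smul_add, smul_smul, mul_div_cancel₀ _ hc.ne']
  calc c • (A * (S + lam • 1)⁻¹).trace
      ≤ c • (A * (c • (A + (lam / c) • 1))⁻¹).trace := by
        rw [hscale]
        gcongr
        exact hA.trace_mul_inv_le_of_le (hscale ▸ hD.smul hc) (by gcongr)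
    _ = (A * (A + (lam / c) • 1)⁻¹).trace := by
        rw [inv_real_smul hD.isUnit hc.ne', mul_smul_comm, trace_smul, smul_smul,
          mul_inv_cancel₀ hc.ne', one_smul]

end Matrix

theorem stmt16_general
    {d K : ℕ} (A : Fin K → Matrix (Fin d) (Fin d) ℝ)
    (hA : ∀ k, (A k).PosSemidef)
    (ρ : Fin K → ℝ) (hρpos : ∀ k, 0 < ρ k)
    (lam : ℝ) (hlam : 0 < lam) :
    Matrix.trace ((∑ k, ρ k • A k) * ((∑ k, ρ k • A k) + lam • 1)⁻¹)
      ≤ ∑ k, Matrix.trace (A k * (A k + (lam / ρ k) • 1)⁻¹) := by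
  have hsummand_le : ∀ k, ρ k • A k ≤ ∑ j, ρ j • A j := fun k =>
    Finset.single_le_sum (fun j _ => ((hA j).smul (hρpos j).le).nonneg) (Finset.mem_univ k)
  calc Matrix.trace ((∑ k, ρ k • A k) * ((∑ k, ρ k • A k) + lam • 1)⁻¹)
      = ∑ k, ρ k • Matrix.trace (A k * ((∑ j, ρ j • A j) + lam • 1)⁻¹) := by
        simp only [Finset.sum_mul, smul_mul_assoc, trace_sum, trace_smul]
    _ ≤ ∑ k, Matrix.trace (A k * (A k + (lam / ρ k) • 1)⁻¹) :=
        Finset.sum_le_sum fun k _ => (hA k).smul_trace_mul_inv_le (hρpos k) hlam (hsummand_le k)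

/-- for PSD matrices `A_k`, weights `ρ_k > 0` summing to 1,
`A := Σ_k ρ_k A_k` and `λ > 0`:
`Tr(A(A+λI)⁻¹) ≤ Σ_k Tr(A_k(A_k + (λ/ρ_k)I)⁻¹)`. -/
theorem stmt16
    {d K : ℕ} (A : Fin K → Matrix (Fin d) (Fin d) ℝ)
    (hA : ∀ k, (A k).PosSemidef)
    (ρ : Fin K → ℝ) (hρpos : ∀ k, 0 < ρ k) (hρsum : ∑ k, ρ k = 1)
    (lam : ℝ) (hlam : 0 < lam) :
    Matrix.trace ((∑ k, ρ k • A k) * ((∑ k, ρ k • A k) + lam • 1)⁻¹)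
      ≤ ∑ k, Matrix.trace (A k * (A k + (lam / ρ k) • 1)⁻¹) :=
  stmt16_general A hA ρ hρpos lam hlam
end

section
/- Under MCAR (H ⟂ (X,Y)), the effective dimension of zero-imputation is at most the sum of local effective dimensions: for every λ > 0, d_λ^{I⁰} := Tr(Σ^{I⁰}(Σ^{I⁰} + λI_d)^{-1}) ≤ Σ_{k=1}^K Tr(Σ_{obs(k)}(Σ_{obs(k)} + (λ/ρ_k) I)^{-1}), where Σ^{I⁰} := E[(M ⊙ X)(M ⊙ X)^⊤] = Σ_k ρ_k Σ^{(k)} and Σ^{(k)} is the covariance of X with all coordinates outside obs(k) set to zero. -/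
/-!
Independence of the client index from the covariates gives `Σ^{I⁰} = ∑ₖ ρₖ Σ⁽ᵏ⁾`, a sum of
positive semidefinite matrices `Bₖ = ρₖ Σ⁽ᵏ⁾`. Since inversion is operator antitone on positive
definite matrices, `tr(Bₖ (∑ⱼ Bⱼ + λ)⁻¹) ≤ tr(Bₖ (Bₖ + λ)⁻¹)`, so the effective dimension
`A ↦ tr(A (A + λ)⁻¹)` is subadditive over positive semidefinite summands. Scaling `Σ⁽ᵏ⁾` by `ρₖ`
turns `λ` into `λ / ρₖ`, and after reordering the coordinates `Σ⁽ᵏ⁾` is block diagonal with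
blocks `Σ_{obs(k)}` and `0`, the zero block contributing nothing to the trace.
-/

open MeasureTheory ProbabilityTheory Matrix

namespace Matrix

variable {n : Type*} [DecidableEq n]

theorem PosSemidef.posDef_add_smul_one {A : Matrix n n ℝ} (hA : A.PosSemidef) {c : ℝ}
    (hc : 0 < c) : (A + c • 1).PosDef :=
  PosDef.posSemidef_add hA (PosDef.one.smul hc)

def mask (s : Finset n) (A : Matrix n n ℝ) : Matrix n n ℝ :=
  of fun i j => if i ∈ s ∧ j ∈ s then A i j else 0

theorem submatrix_sumCompl_mask (s : Finset n) (A : Matrix n n ℝ) :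
    (A.mask s).submatrix (Equiv.sumCompl (· ∈ s)) (Equiv.sumCompl (· ∈ s))
      = fromBlocks (A.submatrix (↑) (↑)) 0 0 0 := by
  ext (i | i) (j | j) <;> simp [Matrix.mask, i.2, j.2]

variable [Fintype n]

open scoped MatrixOrder in
theorem PosSemidef.trace_mul_nonneg_s17 {A B : Matrix n n ℝ} (hA : A.PosSemidef)
    (hB : B.PosSemidef) : 0 ≤ (A * B).trace := by
  set S := CFC.sqrt A
  have hS : Sᴴ = S := (CFC.sqrt_nonneg A).posSemidef.isHermitian
  have hSS : S * S = A := CFC.sqrt_mul_sqrt_self A hA.nonneg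
  calc 0 ≤ (S * B * Sᴴ).trace := (hB.mul_mul_conjTranspose_same S).trace_nonneg
    _ = (A * B).trace := by rw [hS, trace_mul_cycle, hSS]

-- Expand `(B⁻¹x - y) ⬝ᵥ B (B⁻¹x - y) ≥ 0`.
theorem PosDef.two_mul_dotProduct_sub_le {B : Matrix n n ℝ} (hB : B.PosDef) (x y : n → ℝ) :
    2 * (x ⬝ᵥ y) - y ⬝ᵥ B *ᵥ y ≤ x ⬝ᵥ B⁻¹ *ᵥ x := by
  have hBB : B * B⁻¹ = 1 := mul_nonsing_inv B (isUnit_iff_ne_zero.2 hB.det_pos.ne')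
  have hBT : Bᵀ = B := by simpa [conjTranspose_eq_transpose_of_trivial] using hB.isHermitian.eq
  have hsymm : ∀ u v, u ⬝ᵥ B *ᵥ v = v ⬝ᵥ B *ᵥ u := fun u v => by
    rw [dotProduct_mulVec, ← mulVec_transpose, hBT, dotProduct_comm]
  set z := B⁻¹ *ᵥ x - y
  have hBz : B *ᵥ z = x - B *ᵥ y := by
    rw [mulVec_sub, mulVec_mulVec, hBB, one_mulVec]
  have h0 : 0 ≤ z ⬝ᵥ B *ᵥ z := by simpa using hB.posSemidef.dotProduct_mulVec_nonneg z
  have hxy : (B⁻¹ *ᵥ x) ⬝ᵥ B *ᵥ y = x ⬝ᵥ y := by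
    rw [hsymm, mulVec_mulVec, hBB, one_mulVec, dotProduct_comm]
  rw [hBz, sub_dotProduct, dotProduct_sub, dotProduct_sub, hxy, dotProduct_comm (B⁻¹ *ᵥ x),
    dotProduct_comm y x] at h0
  linarith

-- With `y = A⁻¹x`: `x ⬝ᵥ A⁻¹x = 2 x ⬝ᵥ y - y ⬝ᵥ Ay ≤ 2 x ⬝ᵥ y - y ⬝ᵥ By ≤ x ⬝ᵥ B⁻¹x`.
theorem PosDef.posSemidef_inv_sub_inv_s17 {A B : Matrix n n ℝ} (hA : A.PosDef) (hB : B.PosDef)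
    (hAB : (A - B).PosSemidef) : (B⁻¹ - A⁻¹).PosSemidef := by
  refine PosSemidef.of_dotProduct_mulVec_nonneg
    (hB.inv.isHermitian.sub hA.inv.isHermitian) fun x => ?_
  set y := A⁻¹ *ᵥ x
  have hAy : A *ᵥ y = x := by
    rw [mulVec_mulVec, mul_nonsing_inv A (isUnit_iff_ne_zero.2 hA.det_pos.ne'), one_mulVec]
  have hBA : y ⬝ᵥ B *ᵥ y ≤ y ⬝ᵥ A *ᵥ y := by
    have := hAB.dotProduct_mulVec_nonneg y
    rw [star_trivial, sub_mulVec, dotProduct_sub] at this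
    linarith
  have := hB.two_mul_dotProduct_sub_le x y
  rw [hAy, dotProduct_comm y x] at hBA
  rw [star_trivial, sub_mulVec, dotProduct_sub]
  linarith

theorem inv_smul_of_ne_zero {K : Type*} [Field K] {r : K} (hr : r ≠ 0) (M : Matrix n n K) :
    (r • M)⁻¹ = r⁻¹ • M⁻¹ := by
  by_cases hM : IsUnit M.det
  · exact inv_smul' M (Units.mk0 r hr) hM
  · have hrM : ¬IsUnit (r • M).det := by simpa [det_smul, isUnit_iff_ne_zero, hr] using hM
    rw [nonsing_inv_apply_not_isUnit _ hM, nonsing_inv_apply_not_isUnit _ hrM, smul_zero]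

noncomputable def effectiveDim (A : Matrix n n ℝ) (c : ℝ) : ℝ := (A * (A + c • 1)⁻¹).trace

theorem trace_mul_inv_add_le_effectiveDim {B R : Matrix n n ℝ} (hB : B.PosSemidef)
    (hR : R.PosSemidef) {c : ℝ} (hc : 0 < c) :
    (B * (B + R + c • 1)⁻¹).trace ≤ effectiveDim B c := by
  have hBRc : (B + R + c • 1).PosDef := by
    rw [add_right_comm]; exact (hB.posDef_add_smul_one hc).add_posSemidef hR
  have hanti := hBRc.posSemidef_inv_sub_inv_s17 (hB.posDef_add_smul_one hc) (by simpa using hR)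
  have := hB.trace_mul_nonneg_s17 hanti
  rw [mul_sub, trace_sub] at this
  rw [effectiveDim]
  linarith

theorem effectiveDim_sum_le {ι : Type*} (s : Finset ι) {B : ι → Matrix n n ℝ}
    (hB : ∀ i ∈ s, (B i).PosSemidef) {c : ℝ} (hc : 0 < c) :
    effectiveDim (∑ i ∈ s, B i) c ≤ ∑ i ∈ s, effectiveDim (B i) c := by
  classical
  rw [effectiveDim, Finset.sum_mul, trace_sum]
  refine Finset.sum_le_sum fun i hi => ?_
  rw [← Finset.add_sum_erase s B hi]
  exact trace_mul_inv_add_le_effectiveDim (hB i hi)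
    (posSemidef_sum _ fun j hj => hB j (Finset.mem_of_mem_erase hj)) hc

theorem effectiveDim_smul {r : ℝ} (hr : r ≠ 0) (B : Matrix n n ℝ) (c : ℝ) :
    effectiveDim (r • B) c = effectiveDim B (c / r) := by
  have : r • B + c • (1 : Matrix n n ℝ) = r • (B + (c / r) • 1) := by
    rw [smul_add, smul_smul, mul_div_cancel₀ c hr]
  rw [effectiveDim, effectiveDim, this, inv_smul_of_ne_zero hr, smul_mul_smul_comm,
    mul_inv_cancel₀ hr, one_smul]

theorem effectiveDim_submatrix_equiv {m : Type*} [Fintype m] [DecidableEq m] (A : Matrix n n ℝ)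
    (e : m ≃ n) (c : ℝ) : effectiveDim (A.submatrix e e) c = effectiveDim A c := by
  have : A.submatrix e e + c • 1 = (A + c • 1).submatrix e e := by
    ext i j; simp [one_apply]
  rw [effectiveDim, this, inv_submatrix_equiv, submatrix_mul_equiv]
  exact e.sum_comp fun i => (A * (A + c • 1)⁻¹) i i

theorem effectiveDim_fromBlocks_zero {o : Type*} [Fintype o] [DecidableEq o] {A : Matrix n n ℝ}
    {c : ℝ} (hA : IsUnit (A + c • 1)) (hc : c ≠ 0) :
    effectiveDim (fromBlocks A 0 0 (0 : Matrix o o ℝ)) c = effectiveDim A c := by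
  have hc1 : IsUnit (c • 1 : Matrix o o ℝ) := by
    simp [isUnit_iff_isUnit_det, hc]
  rw [effectiveDim, ← fromBlocks_one, fromBlocks_smul, fromBlocks_add]
  simp only [smul_zero, add_zero, zero_add]
  rw [inv_fromBlocks_zero₂₁_of_isUnit_iff _ _ _ (by simp [hA, hc1]), fromBlocks_multiply]
  simp [effectiveDim, trace, Fintype.sum_sum_type]

theorem PosSemidef.mask {A : Matrix n n ℝ} (hA : A.PosSemidef) (s : Finset n) :
    (A.mask s).PosSemidef := by
  set D : Matrix n n ℝ := diagonal fun i => if i ∈ s then 1 else 0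
  have hD : Dᴴ = D := by simp [D]
  have : A.mask s = D * A * Dᴴ := by
    ext i j
    simp only [hD, D, diagonal_mul, mul_diagonal, Matrix.mask, of_apply]
    split_ifs <;> simp_all
  rw [this]
  exact hA.mul_mul_conjTranspose_same D

theorem effectiveDim_mask {A : Matrix n n ℝ} (hA : A.PosSemidef) (s : Finset n) {c : ℝ}
    (hc : 0 < c) :
    effectiveDim (A.mask s) c = effectiveDim (A.submatrix (↑) (↑) : Matrix s s ℝ) c := by
  rw [← effectiveDim_submatrix_equiv _ (Equiv.sumCompl (· ∈ s)), submatrix_sumCompl_mask,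
    effectiveDim_fromBlocks_zero _ hc.ne']
  exact ((hA.submatrix _).posDef_add_smul_one hc).isUnit

end Matrix

namespace ProbabilityTheory

variable {Ω : Type*} [MeasurableSpace Ω] {μ : Measure Ω}

theorem integral_comp_eq_sum_of_indepFun {ι β : Type*} [Fintype ι] [MeasurableSpace ι]
    [MeasurableSingletonClass ι] [MeasurableSpace β] {H : Ω → ι} {Z : Ω → β}
    (hHZ : IndepFun H Z μ) (hH : Measurable H) {g : ι → β → ℝ} (hg : ∀ k, Measurable (g k))
    (hgZ : ∀ k, Integrable (fun ω => g k (Z ω)) μ) :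
    ∫ ω, g (H ω) (Z ω) ∂μ = ∑ k, μ.real (H ⁻¹' {k}) * ∫ ω, g k (Z ω) ∂μ := by
  classical
  set φ : ι → ι → ℝ := fun k i => if i = k then 1 else 0
  have hφ : ∀ k, Measurable (φ k) := fun k => measurable_of_countable _
  have hsplit : ∀ ω, g (H ω) (Z ω) = ∑ k, φ k (H ω) * g k (Z ω) := fun ω => by
    simp [φ, ite_mul]
  have hterm : ∀ k, ∫ ω, φ k (H ω) * g k (Z ω) ∂μ = μ.real (H ⁻¹' {k}) * ∫ ω, g k (Z ω) ∂μ := by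
    intro k
    have hind : ∫ ω, φ k (H ω) ∂μ = μ.real (H ⁻¹' {k}) := by
      rw [← integral_indicator_one (hH (measurableSet_singleton k))]
      congr with ω
    rw [← hind]
    exact (hHZ.comp (hφ k) (hg k)).integral_fun_mul_eq_mul_integral
      ((hφ k).comp hH).aestronglyMeasurable (hgZ k).aestronglyMeasurable
  have hint : ∀ k, Integrable (fun ω => φ k (H ω) * g k (Z ω)) μ := fun k =>
    (hgZ k).bdd_mul ((hφ k).comp hH).aestronglyMeasurable (c := 1)
      (ae_of_all _ fun ω => by by_cases h : H ω = k <;> simp [φ, h])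
  simp_rw [hsplit]
  rw [integral_finsetSum _ fun k _ => hint k]
  exact Finset.sum_congr rfl fun k _ => hterm k

variable {n : Type*} {X : Ω → n → ℝ}

noncomputable def secondMoment (μ : Measure Ω) (X : Ω → n → ℝ) : Matrix n n ℝ :=
  of fun i j => ∫ ω, X ω i * X ω j ∂μ

theorem dotProduct_secondMoment_mulVec [Fintype n] (hX : ∀ j, MemLp (fun ω => X ω j) 2 μ)
    (x : n → ℝ) : x ⬝ᵥ secondMoment μ X *ᵥ x = ∫ ω, (x ⬝ᵥ X ω) ^ 2 ∂μ := by
  have hXX : ∀ i j, Integrable (fun ω => x i * x j * (X ω i * X ω j)) μ := fun i j =>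
    ((hX i).integrable_mul (hX j)).const_mul _
  have hsq : ∀ ω, (x ⬝ᵥ X ω) ^ 2 = ∑ i, ∑ j, x i * x j * (X ω i * X ω j) := fun ω => by
    simp only [dotProduct, sq, Finset.sum_mul_sum]
    exact Finset.sum_congr rfl fun i _ => Finset.sum_congr rfl fun j _ => by ring
  simp_rw [hsq]
  rw [integral_finsetSum _ fun i _ => integrable_finsetSum _ fun j _ => hXX i j]
  simp_rw [integral_finsetSum _ fun j _ => hXX _ j, integral_const_mul]
  simp only [dotProduct, mulVec, secondMoment, of_apply, Finset.mul_sum]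
  exact Finset.sum_congr rfl fun i _ => Finset.sum_congr rfl fun j _ => by ring

theorem posSemidef_secondMoment [Fintype n] (hX : ∀ j, MemLp (fun ω => X ω j) 2 μ) :
    (secondMoment μ X).PosSemidef := by
  refine PosSemidef.of_dotProduct_mulVec_nonneg ?_ fun x => ?_
  · ext i j
    simp [secondMoment, mul_comm]
  · rw [star_trivial, dotProduct_secondMoment_mulVec hX]
    exact integral_nonneg fun ω => sq_nonneg _

theorem secondMoment_zeroImputed_eq_sum [DecidableEq n] {ι : Type*} [Fintype ι]
    [MeasurableSpace ι] [MeasurableSingletonClass ι] {H : Ω → ι} (hHX : IndepFun H X μ)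
    (hH : Measurable H) (hX : ∀ j, MemLp (fun ω => X ω j) 2 μ) (obs : ι → Finset n) :
    secondMoment μ (fun ω j => if j ∈ obs (H ω) then X ω j else 0)
      = ∑ k, μ.real (H ⁻¹' {k}) • (secondMoment μ X).mask (obs k) := by
  ext i j
  set g : ι → (n → ℝ) → ℝ := fun k x => (if i ∈ obs k ∧ j ∈ obs k then 1 else 0) * (x i * x j)
  have hg : ∀ k, Measurable (g k) := fun k =>
    measurable_const.mul ((measurable_pi_apply i).mul (measurable_pi_apply j))
  have hgX : ∀ k, Integrable (fun ω => g k (X ω)) μ := fun k =>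
    ((hX i).integrable_mul (hX j)).const_mul _
  have hcomp : ∀ ω, (if i ∈ obs (H ω) then X ω i else 0) * (if j ∈ obs (H ω) then X ω j else 0)
      = g (H ω) (X ω) := fun ω => by
    simp only [g]; split_ifs <;> simp_all
  simp only [secondMoment, of_apply, hcomp, integral_comp_eq_sum_of_indepFun hHX hH hg hgX,
    Matrix.sum_apply, Matrix.smul_apply, mask, g, integral_const_mul, smul_eq_mul]
  refine Finset.sum_congr rfl fun k _ => ?_
  split_ifs <;> simp

end ProbabilityTheory

theorem stmt17_general
    {Ω : Type*} [MeasurableSpace Ω] (μ : Measure Ω)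
    {d K : ℕ}
    (obs : Fin K → Finset (Fin d))
    (H : Ω → Fin K) (X : Ω → Fin d → ℝ) (Y : Ω → ℝ)
    (hHmeas : Measurable H)
    (hX2 : ∀ j, MemLp (fun ω => X ω j) 2 μ)
    -- MCAR : client index independent of the data
    (hMCAR : IndepFun H (fun ω => (X ω, Y ω)) μ)
    -- client proportions
    (ρ : Fin K → ℝ) (hρ : ∀ k, ρ k = (μ (H ⁻¹' {k})).toReal)
    (hρpos : ∀ k, 0 < ρ k)
    -- the observation mask
    (Mf : Ω → Fin d → ℝ)
    (hMf : ∀ ω j, Mf ω j = if j ∈ obs (H ω) then (1 : ℝ) else 0)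
    -- population second moments
    (Sig : Matrix (Fin d) (Fin d) ℝ)
    (hSig : ∀ l j, Sig l j = ∫ ω, X ω l * X ω j ∂μ)
    -- covariance of the zero-imputed covariates
    (SigI0 : Matrix (Fin d) (Fin d) ℝ)
    (hSigI0 : ∀ l j, SigI0 l j = ∫ ω, (Mf ω l * X ω l) * (Mf ω j * X ω j) ∂μ)
    -- the masked covariances Σ⁽ᵏ⁾ (agreeing with Σ on obs(k)×obs(k), zero elsewhere)
    (Sigk : Fin K → Matrix (Fin d) (Fin d) ℝ)
    (hSigk : ∀ k l j, Sigk k l j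
      = if l ∈ obs k ∧ j ∈ obs k then Sig l j else 0)
    -- regularization
    (lam : ℝ) (hlam : 0 < lam) :
    (∀ l j, SigI0 l j = ∑ k, ρ k * Sigk k l j) ∧
    Matrix.trace (SigI0 * (SigI0 + lam • 1)⁻¹)
      ≤ ∑ k, Matrix.trace
          ((Sig.submatrix (Subtype.val : ↥(obs k) → Fin d)
              (Subtype.val : ↥(obs k) → Fin d))
            * ((Sig.submatrix (Subtype.val : ↥(obs k) → Fin d)
                (Subtype.val : ↥(obs k) → Fin d)) + (lam / ρ k) • 1)⁻¹) := by
  have hSig' : Sig = secondMoment μ X := Matrix.ext hSig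
  have hSigPSD : Sig.PosSemidef := hSig' ▸ posSemidef_secondMoment hX2
  have hSigk' : ∀ k, Sigk k = Sig.mask (obs k) := fun k => Matrix.ext (hSigk k)
  have hHX : IndepFun H X μ := hMCAR.comp measurable_id measurable_fst
  have hSigI0' : SigI0 = ∑ k, ρ k • Sig.mask (obs k) := by
    have hzero : SigI0 = secondMoment μ (fun ω j => if j ∈ obs (H ω) then X ω j else 0) :=
      Matrix.ext fun l j => by simp [hSigI0, secondMoment, hMf]
    rw [hzero, secondMoment_zeroImputed_eq_sum hHX hHmeas hX2 obs, ← hSig', funext hρ]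
    rfl
  refine ⟨fun l j => by simp [hSigI0', hSigk', Matrix.sum_apply], ?_⟩
  calc effectiveDim SigI0 lam
      ≤ ∑ k, effectiveDim (ρ k • Sig.mask (obs k)) lam := hSigI0' ▸
        effectiveDim_sum_le _ (fun k _ => (hSigPSD.mask _).smul (hρpos k).le) hlam
    _ = _ := Finset.sum_congr rfl fun k _ => by
        rw [effectiveDim_smul (hρpos k).ne', effectiveDim_mask hSigPSD _ (div_pos hlam (hρpos k))]
        rfl

/-- under MCAR, the effective dimension of zero-imputation is at
most the sum of the local effective dimensions:
`Tr(Σ^{I⁰}(Σ^{I⁰}+λI)⁻¹) ≤ Σ_k Tr(Σ_{obs(k)}(Σ_{obs(k)} + (λ/ρ_k)I)⁻¹)`,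
where `Σ^{I⁰} = E[(M⊙X)(M⊙X)⊤] = Σ_k ρ_k Σ⁽ᵏ⁾`. -/
theorem stmt17
    {Ω : Type*} [MeasurableSpace Ω] (μ : Measure Ω) [IsProbabilityMeasure μ]
    {d K : ℕ}
    (obs : Fin K → Finset (Fin d))
    (H : Ω → Fin K) (X : Ω → Fin d → ℝ) (Y : Ω → ℝ)
    (hHmeas : Measurable H)
    (hXmeas : ∀ j, Measurable fun ω => X ω j)
    (hX2 : ∀ j, MemLp (fun ω => X ω j) 2 μ)
    -- MCAR : client index independent of the data
    (hMCAR : IndepFun H (fun ω => (X ω, Y ω)) μ)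
    -- client proportions
    (ρ : Fin K → ℝ) (hρ : ∀ k, ρ k = (μ (H ⁻¹' {k})).toReal)
    (hρpos : ∀ k, 0 < ρ k)
    -- the observation mask
    (Mf : Ω → Fin d → ℝ)
    (hMf : ∀ ω j, Mf ω j = if j ∈ obs (H ω) then (1 : ℝ) else 0)
    -- population second moments
    (Sig : Matrix (Fin d) (Fin d) ℝ)
    (hSig : ∀ l j, Sig l j = ∫ ω, X ω l * X ω j ∂μ)
    -- covariance of the zero-imputed covariates
    (SigI0 : Matrix (Fin d) (Fin d) ℝ)
    (hSigI0 : ∀ l j, SigI0 l j = ∫ ω, (Mf ω l * X ω l) * (Mf ω j * X ω j) ∂μ)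
    -- the masked covariances Σ⁽ᵏ⁾ (agreeing with Σ on obs(k)×obs(k), zero elsewhere)
    (Sigk : Fin K → Matrix (Fin d) (Fin d) ℝ)
    (hSigk : ∀ k l j, Sigk k l j
      = if l ∈ obs k ∧ j ∈ obs k then Sig l j else 0)
    -- regularization
    (lam : ℝ) (hlam : 0 < lam) :
    (∀ l j, SigI0 l j = ∑ k, ρ k * Sigk k l j) ∧
    Matrix.trace (SigI0 * (SigI0 + lam • 1)⁻¹)
      ≤ ∑ k, Matrix.trace
          ((Sig.submatrix (Subtype.val : ↥(obs k) → Fin d)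
              (Subtype.val : ↥(obs k) → Fin d))
            * ((Sig.submatrix (Subtype.val : ↥(obs k) → Fin d)
                (Subtype.val : ↥(obs k) → Fin d)) + (lam / ρ k) • 1)⁻¹) :=
  stmt17_general μ obs H X Y hHmeas hX2 hMCAR ρ hρ hρpos Mf hMf Sig hSig SigI0 hSigI0 Sigk hSigk lam
    hlam
end

section
/- Let P ∈ {0,1}^d have i.i.d. Bernoulli(τ) coordinates, independent of (X,Y), with τ ∈ (0,1], and assume diag(Σ) = I_d. Then for every θ ∈ ℝ^d, E[(Y − (P ⊙ X)^⊤θ)²] = E[(Y − X^⊤(τθ))²] + τ(1−τ)‖θ‖₂², where the expectation on the left is over both P and (X,Y). -/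
/-!
Split the masked residual as `(Y - X⊤(τθ)) - ∑ⱼ θⱼ (Pⱼ - τ) Xⱼ`. The centred mask
coordinates `Pⱼ - τ` have mean zero, are pairwise uncorrelated with variance `τ(1 - τ)`
(as `Pⱼ² = Pⱼ`), and are independent of `(X, Y)`. Hence the cross term of the square
vanishes and the second summand contributes `τ(1 - τ) ∑ⱼ θⱼ² E[Xⱼ²] = τ(1 - τ) ‖θ‖²`.
-/

open MeasureTheory ProbabilityTheory Matrix

section
variable {Ω : Type*} [MeasurableSpace Ω] {μ : Measure Ω}

lemma integral_sub_sum_sq {ι : Type*} [Fintype ι] (Y : Ω → ℝ) (W : ι → Ω → ℝ)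
    (hY : Integrable (fun ω => Y ω ^ 2) μ) (hYW : ∀ j, Integrable (fun ω => Y ω * W j ω) μ)
    (hWW : ∀ j l, Integrable (fun ω => W j ω * W l ω) μ) :
    ∫ ω, (Y ω - ∑ j, W j ω) ^ 2 ∂μ
      = ∫ ω, Y ω ^ 2 ∂μ - 2 * ∑ j, ∫ ω, Y ω * W j ω ∂μ
        + ∑ j, ∑ l, ∫ ω, W j ω * W l ω ∂μ := by
  have hpt : ∀ ω, (Y ω - ∑ j, W j ω) ^ 2
      = Y ω ^ 2 - 2 * ∑ j, Y ω * W j ω + ∑ j, ∑ l, W j ω * W l ω := by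
    intro ω
    rw [← Finset.mul_sum, ← Finset.sum_mul_sum]
    ring
  have hYW' : Integrable (fun ω => ∑ j, Y ω * W j ω) μ :=
    integrable_finsetSum _ fun j _ => hYW j
  have hWW' : ∀ j, Integrable (fun ω => ∑ l, W j ω * W l ω) μ :=
    fun j => integrable_finsetSum _ fun l _ => hWW j l
  simp_rw [hpt]
  rw [integral_add (by exact hY.sub (hYW'.const_mul 2))
      (integrable_finsetSum _ fun j _ => hWW' j),
    integral_sub hY (hYW'.const_mul 2), integral_const_mul,
    integral_finsetSum _ fun j _ => hYW j, integral_finsetSum _ fun j _ => hWW' j]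
  simp_rw [integral_finsetSum _ fun l _ => hWW _ l]

lemma integral_eq_measureReal_of_ae_eq_zero_or_one {f : Ω → ℝ} (hf : Measurable f)
    (h01 : ∀ᵐ ω ∂μ, f ω = 0 ∨ f ω = 1) :
    ∫ ω, f ω ∂μ = μ.real {ω | f ω = 1} := by
  have he : f =ᵐ[μ] Set.indicator {ω | f ω = 1} 1 := by
    filter_upwards [h01] with ω h
    rcases h with h | h <;> simp [Set.indicator, h]
  rw [integral_congr_ae he]
  exact integral_indicator_one (hf (measurableSet_singleton 1))

lemma memLp_of_ae_eq_zero_or_one [IsFiniteMeasure μ] {f : Ω → ℝ}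
    (hf : AEStronglyMeasurable f μ) (h01 : ∀ᵐ ω ∂μ, f ω = 0 ∨ f ω = 1) (p : ENNReal) :
    MemLp f p μ :=
  memLp_of_bounded (a := 0) (b := 1) (h01.mono fun ω h => by rcases h with h | h <;> simp [h]) hf p

variable [IsProbabilityMeasure μ]

lemma integral_sub_eq_zero_of_integral_eq {f : Ω → ℝ} {c : ℝ} (hf : Integrable f μ)
    (h : ∫ ω, f ω ∂μ = c) : ∫ ω, (f ω - c) ∂μ = 0 := by
  rw [integral_sub hf (integrable_const c), h, integral_const]
  simp

variable {ι : Type*} [DecidableEq ι]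

lemma integral_sub_mul_sub_of_iIndepFun {P : Ω → ι → ℝ} {τ : ℝ}
    (hPmeas : ∀ j, Measurable fun ω => P ω j) (h01 : ∀ j, ∀ᵐ ω ∂μ, P ω j = 0 ∨ P ω j = 1)
    (hmean : ∀ j, ∫ ω, P ω j ∂μ = τ) (hP : iIndepFun (fun j ω => P ω j) μ) (j l : ι) :
    ∫ ω, (P ω j - τ) * (P ω l - τ) ∂μ = if j = l then τ * (1 - τ) else 0 := by
  have hint : ∀ j, Integrable (fun ω => P ω j) μ := fun j =>
    memLp_one_iff_integrable.mp
      (memLp_of_ae_eq_zero_or_one (hPmeas j).aestronglyMeasurable (h01 j) 1)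
  by_cases hjl : j = l
  · subst hjl
    have he : (fun ω => (P ω j - τ) * (P ω j - τ))
        =ᵐ[μ] fun ω => (1 - 2 * τ) * P ω j + τ ^ 2 := by
      filter_upwards [h01 j] with ω h
      rcases h with h | h <;> simp [h] <;> ring
    rw [if_pos rfl, integral_congr_ae he, integral_add ((hint j).const_mul _) (integrable_const _),
      integral_const_mul, hmean, integral_const]
    rw [probReal_univ, smul_eq_mul, one_mul]
    ring
  · have hcentred : ∀ j, ∫ ω, (P ω j - τ) ∂μ = 0 := fun j =>
      integral_sub_eq_zero_of_integral_eq (hint j) (hmean j)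
    have hind : IndepFun (fun ω => P ω j - τ) (fun ω => P ω l - τ) μ :=
      (hP.indepFun hjl).comp (measurable_sub_const τ) (measurable_sub_const τ)
    rw [if_neg hjl]
    exact (hind.integral_mul_eq_mul_integral ((hPmeas j).sub_const τ).aestronglyMeasurable
      ((hPmeas l).sub_const τ).aestronglyMeasurable).trans (by rw [hcentred, zero_mul])

variable [Fintype ι]

lemma integral_sq_sub_sum_mul_of_indepFun {Q V : Ω → ι → ℝ} {U : Ω → ℝ} {s : ℝ}
    (hQ : ∀ j, MemLp (fun ω => Q ω j) 2 μ) (hU : MemLp U 2 μ)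
    (hV : ∀ j, MemLp (fun ω => V ω j) 2 μ) (hmean : ∀ j, ∫ ω, Q ω j ∂μ = 0)
    (hcov : ∀ j l, ∫ ω, Q ω j * Q ω l ∂μ = if j = l then s else 0)
    (hindep : IndepFun Q (fun ω => (U ω, V ω)) μ) (θ : ι → ℝ) :
    ∫ ω, (U ω - ∑ j, θ j * Q ω j * V ω j) ^ 2 ∂μ
      = ∫ ω, U ω ^ 2 ∂μ + s * ∑ j, θ j ^ 2 * ∫ ω, V ω j ^ 2 ∂μ := by
  have hcross : ∀ j, IndepFun (fun ω => Q ω j) (fun ω => U ω * V ω j) μ := fun j =>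
    hindep.comp (measurable_pi_apply j)
      (by fun_prop : Measurable fun z : ℝ × (ι → ℝ) => z.1 * z.2 j)
  have hquad : ∀ j l, IndepFun (fun ω => Q ω j * Q ω l) (fun ω => V ω j * V ω l) μ :=
    fun j l => hindep.comp (by fun_prop : Measurable fun q : ι → ℝ => q j * q l)
      (by fun_prop : Measurable fun z : ℝ × (ι → ℝ) => z.2 j * z.2 l)
  have hUW : ∀ j, (fun ω => U ω * (θ j * Q ω j * V ω j))
      = fun ω => θ j * (Q ω j * (U ω * V ω j)) := fun j => by ext ω; ring
  have hWW : ∀ j l, (fun ω => θ j * Q ω j * V ω j * (θ l * Q ω l * V ω l))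
      = fun ω => θ j * θ l * ((Q ω j * Q ω l) * (V ω j * V ω l)) := fun j l => by ext ω; ring
  rw [integral_sub_sum_sq U (fun j ω => θ j * Q ω j * V ω j) hU.integrable_sq
    (fun j => by
      rw [hUW]
      exact ((hcross j).integrable_mul ((hQ j).integrable one_le_two)
        (hU.integrable_mul (hV j))).const_mul _)
    (fun j l => by
      rw [hWW]
      exact ((hquad j l).integrable_mul ((hQ j).integrable_mul (hQ l))
        ((hV j).integrable_mul (hV l))).const_mul _)]
  simp only [hUW, hWW, integral_const_mul]
  have hcross_eq : ∀ j, ∫ ω, Q ω j * (U ω * V ω j) ∂μ = 0 := fun j =>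
    ((hcross j).integral_mul_eq_mul_integral (hQ j).1 (hU.1.mul (hV j).1)).trans
      (by rw [hmean, zero_mul])
  have hquad_eq : ∀ j l, ∫ ω, Q ω j * Q ω l * (V ω j * V ω l) ∂μ
      = (if j = l then s else 0) * ∫ ω, V ω j * V ω l ∂μ := fun j l =>
    ((hquad j l).integral_mul_eq_mul_integral ((hQ j).1.mul (hQ l).1)
      ((hV j).1.mul (hV l).1)).trans (by rw [hcov])
  simp only [hcross_eq, hquad_eq, mul_zero, Finset.sum_const_zero, ite_mul, zero_mul,
    mul_ite, Finset.sum_ite_eq, Finset.mem_univ, if_true, Finset.mul_sum, ← pow_two, sub_zero]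
  exact congrArg _ (Finset.sum_congr rfl fun j _ => by ring)

end

theorem stmt18_general
    {Ω : Type*} [MeasurableSpace Ω] (μ : Measure Ω) [IsProbabilityMeasure μ]
    {d : ℕ}
    (X : Ω → Fin d → ℝ) (Y : Ω → ℝ)
    (hX2 : ∀ j, MemLp (fun ω => X ω j) 2 μ) (hY2 : MemLp Y 2 μ)
    (Sig : Matrix (Fin d) (Fin d) ℝ)
    (hSig : ∀ l j, Sig l j = ∫ ω, X ω l * X ω j ∂μ)
    (hdiag : ∀ j, Sig j j = 1)
    (τ : ℝ) (hτ0 : 0 < τ)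
    -- the Bernoulli(τ) mask with i.i.d. coordinates, independent of (X,Y)
    (P : Ω → Fin d → ℝ)
    (hPmeas : ∀ j, Measurable fun ω => P ω j)
    (hP01 : ∀ j, ∀ᵐ ω ∂μ, P ω j = 0 ∨ P ω j = 1)
    (hPber : ∀ j, μ {ω | P ω j = 1} = ENNReal.ofReal τ)
    (hPiid : iIndepFun (fun j ω => P ω j) μ)
    (hPindep : IndepFun (fun ω => P ω) (fun ω => (X ω, Y ω)) μ) :
    ∀ θ : Fin d → ℝ,
      ∫ ω, (Y ω - ∑ j, P ω j * X ω j * θ j) ^ 2 ∂μ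
        = (∫ ω, (Y ω - ∑ j, τ * θ j * X ω j) ^ 2 ∂μ)
          + τ * (1 - τ) * ∑ j, θ j ^ 2 := by
  intro θ
  have hmean : ∀ j, ∫ ω, P ω j ∂μ = τ := fun j => by
    rw [integral_eq_measureReal_of_ae_eq_zero_or_one (hPmeas j) (hP01 j), measureReal_def,
      hPber j, ENNReal.toReal_ofReal hτ0.le]
  have hPL2 : ∀ j, MemLp (fun ω => P ω j) 2 μ := fun j =>
    memLp_of_ae_eq_zero_or_one (hPmeas j).aestronglyMeasurable (hP01 j) 2
  have hU : MemLp (fun ω => Y ω - ∑ j, τ * θ j * X ω j) 2 μ :=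
    hY2.sub (memLp_finsetSum _ fun j _ => (hX2 j).const_mul _)
  have hindep : IndepFun (fun ω j => P ω j - τ)
      (fun ω => (Y ω - ∑ j, τ * θ j * X ω j, X ω)) μ :=
    hPindep.comp (by fun_prop : Measurable fun (p : Fin d → ℝ) j => p j - τ)
      (by fun_prop : Measurable fun z : (Fin d → ℝ) × ℝ => (z.2 - ∑ j, τ * θ j * z.1 j, z.1))
  have hsplit : ∀ ω, Y ω - ∑ j, P ω j * X ω j * θ j
      = (Y ω - ∑ j, τ * θ j * X ω j) - ∑ j, θ j * (P ω j - τ) * X ω j := fun ω => by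
    rw [sub_sub, ← Finset.sum_add_distrib]
    exact congrArg _ (Finset.sum_congr rfl fun j _ => by ring)
  have hXsq : ∀ j, ∫ ω, X ω j ^ 2 ∂μ = 1 := fun j => by
    simpa only [pow_two, hSig] using hdiag j
  simp_rw [hsplit]
  rw [integral_sq_sub_sum_mul_of_indepFun (Q := fun ω j => P ω j - τ)
    (fun j => (hPL2 j).sub (memLp_const τ)) hU hX2
    (fun j => integral_sub_eq_zero_of_integral_eq ((hPL2 j).integrable one_le_two) (hmean j))
    (integral_sub_mul_sub_of_iIndepFun hPmeas hP01 hmean hPiid) hindep θ]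
  simp only [hXsq, mul_one]

/-- for an i.i.d. Bernoulli(τ) mask `P` independent of `(X,Y)` and
normalized features (`diag(Σ) = I`), for every `θ`:
`E[(Y − (P⊙X)⊤θ)²] = E[(Y − X⊤(τθ))²] + τ(1−τ)‖θ‖₂²`. -/
theorem stmt18
    {Ω : Type*} [MeasurableSpace Ω] (μ : Measure Ω) [IsProbabilityMeasure μ]
    {d : ℕ}
    (X : Ω → Fin d → ℝ) (Y : Ω → ℝ)
    (hXmeas : ∀ j, Measurable fun ω => X ω j) (hYmeas : Measurable Y)
    (hX2 : ∀ j, MemLp (fun ω => X ω j) 2 μ) (hY2 : MemLp Y 2 μ)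
    (Sig : Matrix (Fin d) (Fin d) ℝ)
    (hSig : ∀ l j, Sig l j = ∫ ω, X ω l * X ω j ∂μ)
    (hdiag : ∀ j, Sig j j = 1)
    (τ : ℝ) (hτ0 : 0 < τ) (hτ1 : τ ≤ 1)
    -- the Bernoulli(τ) mask with i.i.d. coordinates, independent of (X,Y)
    (P : Ω → Fin d → ℝ)
    (hPmeas : ∀ j, Measurable fun ω => P ω j)
    (hP01 : ∀ j, ∀ᵐ ω ∂μ, P ω j = 0 ∨ P ω j = 1)
    (hPber : ∀ j, μ {ω | P ω j = 1} = ENNReal.ofReal τ)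
    (hPiid : iIndepFun (fun j ω => P ω j) μ)
    (hPindep : IndepFun (fun ω => P ω) (fun ω => (X ω, Y ω)) μ) :
    ∀ θ : Fin d → ℝ,
      ∫ ω, (Y ω - ∑ j, P ω j * X ω j * θ j) ^ 2 ∂μ
        = (∫ ω, (Y ω - ∑ j, τ * θ j * X ω j) ^ 2 ∂μ)
          + τ * (1 - τ) * ∑ j, θ j ^ 2 :=
  stmt18_general μ X Y hX2 hY2 Sig hSig hdiag τ hτ0 P hPmeas hP01 hPber hPiid hPindep
end

section
/- Let N be a binomial random variable with parameters n ≥ 1 and p ∈ (0,1]. Then E[𝟙{N > 0}/N] ≤ 2/(np). -/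
/-! For `k ≥ 1` we have `1/k ≤ 2/(k+1)`, and `E[1/(N+1)]` is explicit: the identity
`(n+1) C(n,k) = (k+1) C(n+1,k+1)` turns `∑ C(n,k) pᵏ qⁿ⁻ᵏ/(k+1)` into a binomial expansion of
`(p+q)ⁿ⁺¹` missing its `k = 0` term, so `E[1/(N+1)] = (1 - (1-p)ⁿ⁺¹)/((n+1)p) ≤ 1/((n+1)p)`. -/

open MeasureTheory

theorem integral_comp_eq_sum_of_measure_preimage_eq_zero {Ω : Type*} [MeasurableSpace Ω]
    (μ : Measure Ω) [IsFiniteMeasure μ] {N : Ω → ℕ} (hN : Measurable N) (f : ℕ → ℝ)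
    {s : Finset ℕ} (hs : ∀ k ∉ s, μ {ω | N ω = k} = 0) :
    ∫ ω, f (N ω) ∂μ = ∑ k ∈ s, μ.real {ω | N ω = k} * f k := by
  have hmem : ∀ᵐ ω ∂μ, N ω ∈ s := by
    have : μ (⋃ k ∉ s, {ω | N ω = k}) = 0 := by
      rw [measure_iUnion_null_iff]
      intro k
      rw [measure_iUnion_null_iff]
      exact hs k
    filter_upwards [measure_eq_zero_iff_ae_notMem.mp this] with ω hω
    by_contra h
    exact hω (Set.mem_biUnion h rfl)
  have hsplit : (fun ω => f (N ω)) =ᵐ[μ]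
      fun ω => ∑ k ∈ s, {ω | N ω = k}.indicator (fun _ => f k) ω := by
    filter_upwards [hmem] with ω hω
    rw [Finset.sum_eq_single_of_mem (N ω) hω]
    · simp
    · intro k _ hk
      exact Set.indicator_of_notMem (Ne.symm hk) _
  have hmeas : ∀ k, MeasurableSet {ω | N ω = k} := fun k => hN (measurableSet_singleton k)
  rw [integral_congr_ae hsplit, integral_finsetSum]
  · simp_rw [integral_indicator_const _ (hmeas _), smul_eq_mul]
  · exact fun k _ => (integrable_const (f k)).indicator (hmeas k)

theorem mul_sum_choose_mul_pow_div_succ {K : Type*} [Field K] [CharZero K] (n : ℕ) (p q : K) :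
    ((n + 1) * p) * ∑ k ∈ Finset.range (n + 1), n.choose k * p ^ k * q ^ (n - k) / (k + 1)
      = (p + q) ^ (n + 1) - q ^ (n + 1) := by
  have hterm : ∀ k ∈ Finset.range (n + 1),
      ((n + 1) * p) * (n.choose k * p ^ k * q ^ (n - k) / (k + 1))
        = p ^ (k + 1) * q ^ (n + 1 - (k + 1)) * (n + 1).choose (k + 1) := by
    intro k _
    have hchoose : ((n : K) + 1) * n.choose k = (n + 1).choose (k + 1) * ((k : K) + 1) := by
      exact_mod_cast Nat.add_one_mul_choose_eq n k
    have hk : (k : K) + 1 ≠ 0 := by exact_mod_cast k.succ_ne_zero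
    rw [Nat.add_sub_add_right]
    field_simp
    linear_combination (p ^ (k + 1) * q ^ (n - k)) * hchoose
  rw [Finset.mul_sum, Finset.sum_congr rfl hterm, add_pow, Finset.sum_range_succ' _ (n + 1)]
  simp

theorem indicator_pos_inv_le_two_div_succ (k : ℕ) :
    (if k = 0 then (0 : ℝ) else 1 / k) ≤ 2 / (k + 1) := by
  split_ifs with hk
  · positivity
  · have hk1 : (1 : ℝ) ≤ k := by exact_mod_cast Nat.one_le_iff_ne_zero.mpr hk
    rw [div_le_div_iff₀ (by positivity) (by positivity)]
    linarith

theorem sum_binomial_mul_indicator_pos_inv_le (n : ℕ) {p : ℝ} (hp0 : 0 < p) (hp1 : p ≤ 1) :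
    ∑ k ∈ Finset.range (n + 1), n.choose k * p ^ k * (1 - p) ^ (n - k)
        * (if k = 0 then (0 : ℝ) else 1 / k)
      ≤ 2 / ((n + 1) * p) := by
  have hq : 0 ≤ 1 - p := sub_nonneg.mpr hp1
  have hnp : (0 : ℝ) < (n + 1) * p := by positivity
  calc _ ≤ ∑ k ∈ Finset.range (n + 1), n.choose k * p ^ k * (1 - p) ^ (n - k) * (2 / (k + 1)) :=
        Finset.sum_le_sum fun k _ =>
          mul_le_mul_of_nonneg_left (indicator_pos_inv_le_two_div_succ k) (by positivity)
    _ = 2 / ((n + 1) * p) * (((n + 1) * p) *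
          ∑ k ∈ Finset.range (n + 1), n.choose k * p ^ k * (1 - p) ^ (n - k) / (k + 1)) := by
        rw [← mul_assoc, div_mul_cancel₀ _ hnp.ne', Finset.mul_sum]
        exact Finset.sum_congr rfl fun k _ => by ring
    _ = 2 / ((n + 1) * p) * (1 - (1 - p) ^ (n + 1)) := by
        rw [mul_sum_choose_mul_pow_div_succ, add_sub_cancel, one_pow]
    _ ≤ 2 / ((n + 1) * p) :=
        mul_le_of_le_one_right (by positivity) (sub_le_self _ (pow_nonneg hq _))

/-- if `N ~ Binomial(n, p)` with `n ≥ 1` and `p ∈ (0,1]`, then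
`E[𝟙{N > 0}/N] ≤ 2/(np)`. -/
theorem stmt19
    {Ω : Type*} [MeasurableSpace Ω] (μ : Measure Ω) [IsProbabilityMeasure μ]
    (n : ℕ) (hn : 1 ≤ n) (p : ℝ) (hp0 : 0 < p) (hp1 : p ≤ 1)
    (N : Ω → ℕ) (hNmeas : Measurable N)
    (hdist : ∀ k : ℕ, μ {ω | N ω = k}
      = ENNReal.ofReal ((n.choose k : ℝ) * p ^ k * (1 - p) ^ (n - k))) :
    ∫ ω, (if N ω = 0 then (0 : ℝ) else 1 / (N ω : ℝ)) ∂μ ≤ 2 / (n * p) := by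
  have hsupport : ∀ k ∉ Finset.range (n + 1), μ {ω | N ω = k} = 0 := fun k hk => by
    rw [hdist, Nat.choose_eq_zero_of_lt (by simpa [Nat.lt_succ_iff] using hk)]
    simp
  have hprob : ∀ k, μ.real {ω | N ω = k} = n.choose k * p ^ k * (1 - p) ^ (n - k) := fun k => by
    rw [measureReal_def, hdist, ENNReal.toReal_ofReal]
    have := sub_nonneg.mpr hp1
    positivity
  rw [integral_comp_eq_sum_of_measure_preimage_eq_zero μ hNmeas
    (fun k => if k = 0 then (0 : ℝ) else 1 / k) hsupport]
  simp only [hprob]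
  refine (sum_binomial_mul_indicator_pos_inv_le n hp0 hp1).trans ?_
  have hn1 : (1 : ℝ) ≤ n := by exact_mod_cast hn
  gcongr
  linarith
end
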